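/- arXiv:2110.15835 — 8 statements merged into one kernel-verified Lean document; each statement's English description precedes it below -/
import Mathlib

section
/- Fix integers 1 ≤ r < s ≤ t. Then there exists N > 0 such that for all integers n > N, D_{r,t}(n) ≥ D_{s,t}(n). -/
/-!
Let `c(x)` count the partitions of `n` into distinct parts having `x` as a part. The parts
`≡ r (mod t)` are `r + kt`, and likewise for `s`, so it suffices that `c` is antitone on
`x ≥ 1` once `n ≥ 9`. Comparing partitions containing `a + 1` but not `a` with those containing
`a` but not `a + 1` reduces `c(a + 1) ≤ c(a)` to `Q(y - 1) ≤ Q(y)` for `y = n - a`, where `Q(y)`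
counts the subsets of `F = [1, n] \ {a, a + 1}` with sum `y`. If `2^i` is the least power of two
`≥ a`, then `1, 2, …, 2^(i-1)` lie in `F`, and with `R = F \ {1, …, 2^(i-1)}`,
`(1 - X) ∏_{k ∈ F} (1 + X^k) = (1 - X^(2^i)) ∏_{k ∈ R} (1 + X^k)`.
Hence `Q(y) - Q(y - 1) = Q_R(y) - Q_R(y - 2^i)`. This is `≥ 0`: raising the largest element of a
subset of `R` by `2^i` stays inside `R`, and for `y = 2^i` it suffices to exhibit one subset of
`R` with sum `2^i`.
-/

/-- `D r t n` is the number of parts congruent to `r` mod `t`, counted with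
multiplicity, over all partitions of `n` into distinct parts. -/
def D (r t n : ℕ) : ℕ :=
  ∑ p ∈ Nat.Partition.distincts n,
    (Multiset.filter (fun j => j % t = r % t) p.parts).card

open Finset Polynomial

def subsetsWithSum (F : Finset ℕ) (y : ℕ) : Finset (Finset ℕ) :=
  {T ∈ F.powerset | ∑ k ∈ T, k = y}

theorem mem_subsetsWithSum {F T : Finset ℕ} {y : ℕ} :
    T ∈ subsetsWithSum F y ↔ T ⊆ F ∧ ∑ k ∈ T, k = y := by
  simp [subsetsWithSum]

theorem subsetsWithSum_zero {F : Finset ℕ} (hF : 0 ∉ F) : subsetsWithSum F 0 = {∅} := by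
  ext T
  simp only [mem_subsetsWithSum, mem_singleton, sum_eq_zero_iff]
  constructor
  · rintro ⟨hTF, hT⟩
    exact eq_empty_of_forall_notMem fun k hk => hF (hT k hk ▸ hTF hk)
  · rintro rfl
    simp

theorem card_subsetsWithSum_le_add {S : Finset ℕ} {z E : ℕ} (hz : 1 ≤ z)
    (hS : ∀ M ∈ S, M ≤ z → M + E ∈ S) :
    #(subsetsWithSum S z) ≤ #(subsetsWithSum S (z + E)) := by
  -- raise the largest element of `T` by `E`; lowering the largest element undoes this
  let raise (T : Finset ℕ) := insert (T.sup id + E) (T.erase (T.sup id))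
  let lower (U : Finset ℕ) := insert (U.sup id - E) (U.erase (U.sup id))
  have hmax {T : Finset ℕ} (hT : T ∈ subsetsWithSum S z) :
      T.sup id ∈ T ∧ ∀ k ∈ T.erase (T.sup id), k < T.sup id := by
    rw [mem_subsetsWithSum] at hT
    have hne : T.Nonempty := nonempty_iff_ne_empty.2 fun h => by simp [h] at hT; omega
    obtain ⟨m, hm, hmax⟩ := exists_mem_eq_sup T hne id
    refine ⟨hmax ▸ hm, fun k hk => lt_of_le_of_ne (le_sup (f := id) (mem_of_mem_erase hk))
      (ne_of_mem_erase hk)⟩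
  have hnotMem {T : Finset ℕ} (hT : T ∈ subsetsWithSum S z) :
      T.sup id + E ∉ T.erase (T.sup id) := fun h => by have := (hmax hT).2 _ h; omega
  refine card_le_card_of_injOn raise (fun T hT => ?_) (Set.LeftInvOn.injOn (f₁' := lower) ?_)
  · have hT' := mem_subsetsWithSum.1 hT
    have hle : T.sup id ≤ z := hT'.2 ▸ single_le_sum (fun k _ => k.zero_le) (hmax hT).1
    rw [mem_coe, mem_subsetsWithSum, sum_insert (hnotMem hT)]
    refine ⟨insert_subset (hS _ (hT'.1 (hmax hT).1) hle) ((erase_subset _ _).trans hT'.1), ?_⟩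
    have := sum_erase_add T id (hmax hT).1
    simp only [id] at this
    omega
  · intro T hT
    have hsup : (raise T).sup id = T.sup id + E := by
      rw [sup_insert]
      exact max_eq_left (Finset.sup_le fun k hk => ((hmax hT).2 k hk).le.trans le_self_add)
    simp only [lower, hsup, Nat.add_sub_cancel]
    rw [erase_insert (hnotMem hT), insert_erase (hmax hT).1]

theorem coeff_prod_one_add_X_pow {R : Type*} [CommSemiring R] (F : Finset ℕ) (y : ℕ) :
    (∏ k ∈ F, (1 + X ^ k : R[X])).coeff y = #(subsetsWithSum F y) := by
  rw [prod_one_add, finsetSum_coeff]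
  refine (sum_congr rfl fun T _ => by rw [prod_pow_eq_pow_sum, coeff_X_pow]).trans ?_
  simp_rw [eq_comm (a := y)]
  rw [sum_boole, subsetsWithSum]

theorem one_sub_mul_prod_one_add_pow_two_pow {R : Type*} [CommRing R] (x : R) (i : ℕ) :
    (1 - x) * ∏ j ∈ range i, (1 + x ^ 2 ^ j) = 1 - x ^ 2 ^ i := by
  induction i with
  | zero => simp
  | succ i ih => rw [prod_range_succ, ← mul_assoc, ih, pow_succ, pow_mul]; ring

theorem coeff_one_sub_X_pow_mul {R : Type*} [Ring R] (p : R[X]) (m y : ℕ) :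
    ((1 - X ^ m) * p).coeff y = p.coeff y - if m ≤ y then p.coeff (y - m) else 0 := by
  rw [sub_mul, one_mul, coeff_sub, coeff_X_pow_mul']

def twoPowsBelow (i : ℕ) : Finset ℕ := (range i).image (2 ^ ·)

theorem mem_twoPowsBelow {i x : ℕ} : x ∈ twoPowsBelow i ↔ ∃ j < i, 2 ^ j = x := by
  simp [twoPowsBelow]

theorem eq_one_or_even_of_mem_twoPowsBelow {i x : ℕ} (hx : x ∈ twoPowsBelow i) :
    x = 1 ∨ Even x := by
  obtain ⟨j, -, rfl⟩ := mem_twoPowsBelow.1 hx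
  rcases j with _ | j
  · exact .inl rfl
  · exact .inr (Nat.even_pow.2 ⟨even_two, j.succ_ne_zero⟩)

theorem lt_of_mem_twoPowsBelow_clog {a x : ℕ} (hx : x ∈ twoPowsBelow (Nat.clog 2 a)) :
    x < a := by
  obtain ⟨j, hj, rfl⟩ := mem_twoPowsBelow.1 hx
  exact Nat.pow_lt_of_lt_clog hj

theorem one_sub_X_mul_prod_one_add_X_pow {F : Finset ℕ} {i : ℕ} (hF : twoPowsBelow i ⊆ F) :
    (1 - X) * ∏ k ∈ F, (1 + X ^ k : ℤ[X]) =
      (1 - X ^ 2 ^ i) * ∏ k ∈ F \ twoPowsBelow i, (1 + X ^ k) := by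
  conv_lhs => rw [← union_sdiff_of_subset hF, prod_union disjoint_sdiff, ← mul_assoc]
  rw [twoPowsBelow, prod_image fun _ _ _ _ h => Nat.pow_right_injective le_rfl h,
    one_sub_mul_prod_one_add_pow_two_pow]

theorem card_subsetsWithSum_pred_le {F : Finset ℕ} {i y : ℕ} (hF : twoPowsBelow i ⊆ F)
    (hy : 1 ≤ y)
    (hR : 2 ^ i ≤ y → #(subsetsWithSum (F \ twoPowsBelow i) (y - 2 ^ i)) ≤
      #(subsetsWithSum (F \ twoPowsBelow i) y)) :
    #(subsetsWithSum F (y - 1)) ≤ #(subsetsWithSum F y) := by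
  have h := congrArg (coeff · y) (one_sub_X_mul_prod_one_add_X_pow hF)
  have hX := coeff_one_sub_X_pow_mul (∏ k ∈ F, (1 + X ^ k : ℤ[X])) 1 y
  rw [pow_one] at hX
  simp only [hX, coeff_one_sub_X_pow_mul, coeff_prod_one_add_X_pow, if_pos hy] at h
  split_ifs at h with hiy
  · have := hR hiy
    omega
  · omega

theorem subsetsWithSum_two_pow_clog_nonempty {n a : ℕ} (hn : 9 ≤ n)
    (hna : n = a + 2 ^ Nat.clog 2 a) :
    (subsetsWithSum ((Icc 1 n \ {a, a + 1}) \ twoPowsBelow (Nat.clog 2 a))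
      (2 ^ Nat.clog 2 a)).Nonempty := by
  set E := 2 ^ Nat.clog 2 a with hE
  have haE : a ≤ E := Nat.le_pow_clog one_lt_two a
  have hpow {x : ℕ} (hx : x ∈ twoPowsBelow (Nat.clog 2 a)) : x < a ∧ (x = 1 ∨ Even x) :=
    ⟨lt_of_mem_twoPowsBelow_clog hx, eq_one_or_even_of_mem_twoPowsBelow hx⟩
  by_cases hEa : E = a ∨ E = a + 1
  · -- `E ≥ 8`, and `3` and `E - 3` are odd numbers `> 1` outside `{a, a + 1}`
    obtain ⟨c, hc⟩ : ∃ c, E = 8 * c := by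
      have : 3 ≤ Nat.clog 2 a := (Nat.pow_lt_pow_iff_right one_lt_two).1 (by omega : 2 ^ 2 < E)
      exact ⟨2 ^ (Nat.clog 2 a - 3), by rw [hE, ← pow_sub_mul_pow 2 this]; ring⟩
    refine ⟨{3, E - 3}, mem_subsetsWithSum.2 ⟨?_, ?_⟩⟩
    · intro x hx
      simp only [mem_insert, mem_singleton] at hx
      simp only [mem_sdiff, mem_Icc, mem_insert, mem_singleton]
      refine ⟨by omega, fun h => ?_⟩
      rcases hpow h with ⟨-, h1 | ⟨m, hm⟩⟩ <;> omega
    · rw [sum_pair (by omega)]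
      omega
  · refine ⟨{E}, mem_subsetsWithSum.2 ⟨?_, sum_singleton _ _⟩⟩
    simp only [singleton_subset_iff, mem_sdiff, mem_Icc, mem_insert, mem_singleton]
    refine ⟨⟨⟨Nat.one_le_two_pow, by omega⟩, by omega⟩, fun h => ?_⟩
    have := (hpow h).1
    omega

theorem card_subsetsWithSum_Icc_sdiff_pair_le {n a : ℕ} (ha : 1 ≤ a) (han : a + 1 ≤ n)
    (hn : 9 ≤ n) :
    #(subsetsWithSum (Icc 1 n \ {a, a + 1}) (n - a - 1)) ≤
      #(subsetsWithSum (Icc 1 n \ {a, a + 1}) (n - a)) := by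
  set i := Nat.clog 2 a
  have haE : a ≤ 2 ^ i := Nat.le_pow_clog one_lt_two a
  have hpow {x : ℕ} (hx : x ∈ twoPowsBelow i) : x < a := lt_of_mem_twoPowsBelow_clog hx
  have hsub : twoPowsBelow i ⊆ Icc 1 n \ {a, a + 1} := fun x hx => by
    obtain ⟨j, -, rfl⟩ := mem_twoPowsBelow.1 hx
    have := hpow hx
    simp only [mem_sdiff, mem_Icc, mem_insert, mem_singleton]
    exact ⟨⟨Nat.one_le_two_pow, by omega⟩, by omega⟩
  have hone : 1 ∉ (Icc 1 n \ {a, a + 1}) \ twoPowsBelow i := by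
    rcases ha.eq_or_lt with rfl | ha
    · simp
    · exact fun h => (mem_sdiff.1 h).2 <|
        mem_twoPowsBelow.2 ⟨0, Nat.clog_pos one_lt_two ha, rfl⟩
  refine card_subsetsWithSum_pred_le hsub (by omega) fun hE => ?_
  rcases hE.eq_or_lt with hE | hE
  · rw [← hE, Nat.sub_self, subsetsWithSum_zero (by simp), card_singleton,
      Nat.one_le_iff_ne_zero, card_ne_zero]
    exact subsetsWithSum_two_pow_clog_nonempty hn (show n = a + 2 ^ i by omega)
  · have hraise : ∀ M ∈ (Icc 1 n \ {a, a + 1}) \ twoPowsBelow i, M ≤ n - a - 2 ^ i →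
        M + 2 ^ i ∈ (Icc 1 n \ {a, a + 1}) \ twoPowsBelow i := by
      intro M hM hMy
      have hM1 : M ≠ 1 := fun h => hone (h ▸ hM)
      simp only [mem_sdiff, mem_Icc, mem_insert, mem_singleton] at hM ⊢
      exact ⟨⟨by omega, by omega⟩, fun h => by have := hpow h; omega⟩
    simpa only [Nat.sub_add_cancel hE.le] using card_subsetsWithSum_le_add (by omega) hraise

theorem sum_distincts_eq_sum_subsetsWithSum {M : Type*} [AddCommMonoid M] (n : ℕ)
    (f : Finset ℕ → M) :
    ∑ p ∈ Nat.Partition.distincts n, f p.parts.toFinset =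
      ∑ S ∈ subsetsWithSum (Icc 1 n) n, f S := by
  have hval {p : n.Partition} (hp : p ∈ Nat.Partition.distincts n) :
      p.parts.toFinset.val = p.parts :=
    (Multiset.toFinset_val _).trans (Multiset.dedup_eq_self.2 (mem_filter.1 hp).2)
  refine sum_bij' (fun p _ => p.parts.toFinset)
    (fun S hS => ⟨S.val, fun hk => ?_, ?_⟩) (fun p hp => ?_) (fun S hS => ?_)
    (fun p hp => ?_) (fun S hS => ?_) (fun _ _ => rfl)
  · exact (mem_Icc.1 ((mem_subsetsWithSum.1 hS).1 hk)).1
  · exact (sum_val S).trans (mem_subsetsWithSum.1 hS).2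
  · refine mem_subsetsWithSum.2 ⟨fun k hk => ?_, ?_⟩
    · have hk := Multiset.mem_toFinset.1 hk
      exact mem_Icc.2 ⟨p.parts_pos hk, Nat.Partition.le_of_mem_parts hk⟩
    · exact (sum_val _).symm.trans (by rw [hval hp, p.parts_sum])
  · exact mem_filter.2 ⟨mem_univ _, S.nodup⟩
  · exact Nat.Partition.ext (hval hp)
  · exact S.val_toFinset

theorem D_eq_sum_subsetsWithSum (r t n : ℕ) :
    D r t n = ∑ S ∈ subsetsWithSum (Icc 1 n) n, #{x ∈ S | x % t = r % t} := by
  rw [D, ← sum_distincts_eq_sum_subsetsWithSum]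
  refine sum_congr rfl fun p hp => ?_
  rw [← Multiset.toFinset_filter,
    Multiset.toFinset_card_of_nodup ((mem_filter.1 hp).2.filter _)]

theorem card_filter_mem_not_mem_subsetsWithSum {F : Finset ℕ} {x o y : ℕ} (hx : x ∈ F)
    (hxy : x ≤ y) (hxo : x ≠ o) :
    #{S ∈ subsetsWithSum F y | x ∈ S ∧ o ∉ S} = #(subsetsWithSum (F \ {x, o}) (y - x)) := by
  refine card_bij' (fun S _ => S.erase x) (fun T _ => insert x T) (fun S hS => ?_)
    (fun T hT => ?_) (fun S hS => insert_erase (mem_filter.1 hS).2.1) (fun T hT => ?_)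
  · obtain ⟨hS, hxS, hoS⟩ := mem_filter.1 hS
    obtain ⟨hSF, rfl⟩ := mem_subsetsWithSum.1 hS
    refine mem_subsetsWithSum.2 ⟨fun k hk => ?_, ?_⟩
    · have := mem_erase.1 hk
      simp only [mem_sdiff, mem_insert, mem_singleton]
      exact ⟨hSF this.2, by rintro (h | h) <;> simp_all⟩
    · rw [← sum_erase_add S _ hxS, Nat.add_sub_cancel]
  · obtain ⟨hTF, hT⟩ := mem_subsetsWithSum.1 hT
    have hxT : x ∉ T := fun h => by simpa using (mem_sdiff.1 (hTF h)).2
    refine mem_filter.2 ⟨mem_subsetsWithSum.2 ⟨insert_subset hx (hTF.trans sdiff_subset), ?_⟩,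
      mem_insert_self x T, ?_⟩
    · rw [sum_insert hxT, hT]
      omega
    · rw [mem_insert, not_or]
      exact ⟨hxo.symm, fun h => by simpa using (mem_sdiff.1 (hTF h)).2⟩
  · have hxT : x ∉ T := fun h => by simpa using (mem_sdiff.1 ((mem_subsetsWithSum.1 hT).1 h)).2
    exact erase_insert hxT

/-- The number of partitions of `n` into distinct parts that have `x` as a part, each such
partition being encoded by its set of parts. -/
def numDistinctWithPart (n x : ℕ) : ℕ := #{S ∈ subsetsWithSum (Icc 1 n) n | x ∈ S}

theorem numDistinctWithPart_eq_add (n x o : ℕ) :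
    numDistinctWithPart n x = #{S ∈ subsetsWithSum (Icc 1 n) n | x ∈ S ∧ o ∈ S} +
      #{S ∈ subsetsWithSum (Icc 1 n) n | x ∈ S ∧ o ∉ S} := by
  rw [numDistinctWithPart, ← card_filter_add_card_filter_not (fun S => o ∈ S), filter_filter,
    filter_filter]

theorem numDistinctWithPart_succ_le {n a : ℕ} (ha : 1 ≤ a) (hn : 9 ≤ n) :
    numDistinctWithPart n (a + 1) ≤ numDistinctWithPart n a := by
  by_cases han : a + 1 ≤ n
  · rw [numDistinctWithPart_eq_add n (a + 1) a, numDistinctWithPart_eq_add n a (a + 1),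
      card_filter_mem_not_mem_subsetsWithSum (by simp; omega) han (by omega),
      card_filter_mem_not_mem_subsetsWithSum (by simp; omega) (by omega) (by omega),
      pair_comm, Nat.sub_add_eq]
    simp_rw [and_comm (a := a + 1 ∈ _)]
    exact Nat.add_le_add_left (card_subsetsWithSum_Icc_sdiff_pair_le ha han hn) _
  · have : numDistinctWithPart n (a + 1) = 0 := card_eq_zero.2 <| filter_eq_empty_iff.2
      fun S hS h => han (mem_Icc.1 ((mem_subsetsWithSum.1 hS).1 h)).2
    omega

theorem numDistinctWithPart_anti {n a b : ℕ} (ha : 1 ≤ a) (hab : a ≤ b) (hn : 9 ≤ n) :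
    numDistinctWithPart n b ≤ numDistinctWithPart n a :=
  antitoneOn_nat_Ici_of_succ_le (fun _ hk => numDistinctWithPart_succ_le hk hn) ha
    (ha.trans hab) hab

theorem exists_eq_add_mul_of_mod_eq {r t x : ℕ} (hrt : r ≤ t) (hx : 1 ≤ x)
    (h : x % t = r % t) : ∃ k, x = r + k * t := by
  have hrx : r ≤ x := by
    rcases hrt.lt_or_eq with hrt | rfl
    · rw [Nat.mod_eq_of_lt hrt] at h
      exact h ▸ Nat.mod_le x t
    · exact Nat.le_of_dvd hx (Nat.dvd_of_mod_eq_zero (h.trans (Nat.mod_self r)))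
  obtain ⟨k, hk⟩ := (Nat.modEq_iff_dvd' hrx).1 h.symm
  exact ⟨k, by rw [mul_comm]; omega⟩

theorem card_filter_mod_eq {S : Finset ℕ} {n r t : ℕ} (hS : S ⊆ Icc 1 n) (hr : 1 ≤ r)
    (hrt : r ≤ t) :
    #{x ∈ S | x % t = r % t} = #{k ∈ range (n + 1) | r + k * t ∈ S} := by
  refine (card_nbij (r + · * t) (fun k hk => ?_) (fun k _ l _ h => ?_) fun x hx => ?_).symm
  · exact mem_filter.2 ⟨(mem_filter.1 hk).2, Nat.add_mul_mod_self_right r k t⟩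
  · exact Nat.eq_of_mul_eq_mul_right (by omega) (Nat.add_left_cancel h)
  · obtain ⟨hxS, hx⟩ := mem_filter.1 hx
    have hxn := mem_Icc.1 (hS hxS)
    obtain ⟨k, rfl⟩ := exists_eq_add_mul_of_mod_eq hrt hxn.1 hx
    refine ⟨k, mem_filter.2 ⟨mem_range.2 ?_, hxS⟩, rfl⟩
    nlinarith

theorem D_eq_sum_numDistinctWithPart {r t : ℕ} (hr : 1 ≤ r) (hrt : r ≤ t) (n : ℕ) :
    D r t n = ∑ k ∈ range (n + 1), numDistinctWithPart n (r + k * t) := by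
  rw [D_eq_sum_subsetsWithSum]
  calc ∑ S ∈ subsetsWithSum (Icc 1 n) n, #{x ∈ S | x % t = r % t}
      = ∑ S ∈ subsetsWithSum (Icc 1 n) n, #{k ∈ range (n + 1) | r + k * t ∈ S} :=
        sum_congr rfl fun S hS => card_filter_mod_eq (mem_subsetsWithSum.1 hS).1 hr hrt
    _ = _ := sum_card_bipartiteAbove_eq_sum_card_bipartiteBelow _

theorem stmt1 (r s t : ℕ) (hr : 1 ≤ r) (hrs : r < s) (hst : s ≤ t) :
    ∃ N : ℕ, 0 < N ∧ ∀ n : ℕ, N < n → D s t n ≤ D r t n := by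
  refine ⟨8, by norm_num, fun n hn => ?_⟩
  rw [D_eq_sum_numDistinctWithPart (hr.trans hrs.le) hst,
    D_eq_sum_numDistinctWithPart hr (hrs.le.trans hst)]
  exact sum_le_sum fun k _ => numDistinctWithPart_anti (by omega) (by omega) hn
end

section
/- For all integers t with 2 ≤ t ≤ 10, all integers r, s with 1 ≤ r < s ≤ t, and all integers n > 8, the inequality D_{r,t}(n) ≥ D_{s,t}(n) holds. -/
open Finset

namespace DistinctParts

lemma eq_of_insert_eq_insert {α : Type*} [DecidableEq α] {a : α} {s t : Finset α} (hs : a ∉ s)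
    (ht : a ∉ t) (h : insert a s = insert a t) : s = t := by
  rw [← erase_insert hs, h, erase_insert ht]

def binChain (a : ℕ) : Finset ℕ := (range a).image (2 ^ ·)

lemma mem_binChain {a x : ℕ} : x ∈ binChain a ↔ ∃ c < a, 2 ^ c = x := by
  simp [binChain]

lemma sum_binChain_add_one (a : ℕ) : ∑ x ∈ binChain a, x + 1 = 2 ^ a := by
  rw [binChain, sum_image fun _ _ _ _ h => Nat.pow_right_injective le_rfl h,
    Nat.geomSum_eq le_rfl]
  have := Nat.one_le_two_pow (n := a)
  omega

lemma exists_two_pow_notMem (A : Finset ℕ) : ∃ c, 2 ^ c ∉ A :=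
  ⟨A.sup id, fun h => (Nat.lt_two_pow_self (n := A.sup id)).not_ge (le_sup (f := id) h)⟩

def carryExp (A : Finset ℕ) : ℕ := Nat.find (exists_two_pow_notMem A)

lemma two_pow_carryExp_notMem (A : Finset ℕ) : 2 ^ carryExp A ∉ A :=
  Nat.find_spec (exists_two_pow_notMem A)

lemma two_pow_mem_of_lt_carryExp {A : Finset ℕ} {c : ℕ} (h : c < carryExp A) : 2 ^ c ∈ A :=
  not_not.mp (Nat.find_min (exists_two_pow_notMem A) h)

lemma binChain_carryExp_subset (A : Finset ℕ) : binChain (carryExp A) ⊆ A := by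
  intro x hx
  obtain ⟨c, hc, rfl⟩ := mem_binChain.mp hx
  exact two_pow_mem_of_lt_carryExp hc

def carryRest (A : Finset ℕ) : Finset ℕ := A \ binChain (carryExp A)

lemma carryRest_subset (A : Finset ℕ) : carryRest A ⊆ A := sdiff_subset

lemma two_pow_notMem_carryRest {A : Finset ℕ} {c : ℕ} (h : c ≤ carryExp A) :
    2 ^ c ∉ carryRest A := by
  intro hc
  rcases h.lt_or_eq with h | rfl
  · exact (mem_sdiff.mp hc).2 (mem_binChain.mpr ⟨c, h, rfl⟩)
  · exact two_pow_carryExp_notMem A (carryRest_subset A hc)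

lemma carryRest_union_binChain (A : Finset ℕ) : carryRest A ∪ binChain (carryExp A) = A :=
  sdiff_union_of_subset (binChain_carryExp_subset A)

lemma eq_of_carryExp_eq_of_carryRest_eq {A₁ A₂ : Finset ℕ} (he : carryExp A₁ = carryExp A₂)
    (hr : carryRest A₁ = carryRest A₂) : A₁ = A₂ := by
  rw [← carryRest_union_binChain A₁, ← carryRest_union_binChain A₂, he, hr]

lemma sum_carryRest_add (A : Finset ℕ) :
    ∑ x ∈ carryRest A, x + 2 ^ carryExp A = ∑ x ∈ A, x + 1 := by
  rw [← sum_binChain_add_one, ← add_assoc, carryRest,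
    sum_sdiff (binChain_carryExp_subset A)]

def carry (A : Finset ℕ) : Finset ℕ := insert (2 ^ carryExp A) (carryRest A)

lemma sum_carry (A : Finset ℕ) : ∑ x ∈ carry A, x = ∑ x ∈ A, x + 1 := by
  rw [carry, sum_insert (two_pow_notMem_carryRest le_rfl), add_comm, sum_carryRest_add]

lemma two_pow_notMem_carry {A : Finset ℕ} {c : ℕ} (h : c < carryExp A) : 2 ^ c ∉ carry A := by
  rw [carry, mem_insert, not_or]
  exact ⟨fun he => h.ne (Nat.pow_right_injective le_rfl he), two_pow_notMem_carryRest h.le⟩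

lemma carry_injective : Function.Injective carry := by
  have exp_le : ∀ {A B}, carry A = carry B → carryExp B ≤ carryExp A :=
    fun h => not_lt.mp fun hlt => two_pow_notMem_carry hlt (h ▸ mem_insert_self _ _)
  intro A₁ A₂ h
  have he : carryExp A₁ = carryExp A₂ :=
    le_antisymm (exp_le h.symm) (exp_le h)
  refine eq_of_carryExp_eq_of_carryRest_eq he (eq_of_insert_eq_insert
    (two_pow_notMem_carryRest le_rfl) (two_pow_notMem_carryRest he.le) ?_)
  rw [carry, carry, he] at h
  rwa [he]

lemma sup_id_mem {B : Finset ℕ} (hB : B.Nonempty) : B.sup id ∈ B := by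
  obtain ⟨i, hi, he⟩ := exists_mem_eq_sup B hB id
  rwa [he]

def bump (c : ℕ) (B : Finset ℕ) : Finset ℕ := insert (B.sup id + c) (B.erase (B.sup id))

lemma sup_add_notMem_erase (B : Finset ℕ) (c : ℕ) : B.sup id + c ∉ B.erase (B.sup id) := by
  intro h
  have hle : id (B.sup id + c) ≤ B.sup id := le_sup (mem_of_mem_erase h)
  have hne := ne_of_mem_erase h
  simp only [id] at hle
  omega

lemma sum_bump {B : Finset ℕ} (hB : B.Nonempty) (c : ℕ) :
    ∑ x ∈ bump c B, x = ∑ x ∈ B, x + c := by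
  rw [bump, sum_insert (sup_add_notMem_erase B c), ← sum_erase_add B _ (sup_id_mem hB)]
  ring

lemma sup_bump (B : Finset ℕ) (c : ℕ) : (bump c B).sup id = B.sup id + c := by
  rw [bump, sup_insert]
  exact sup_eq_left.mpr ((sup_mono (erase_subset _ B)).trans (Nat.le_add_right _ _))

lemma bump_injOn (c : ℕ) : Set.InjOn (bump c) {B | B.Nonempty} := by
  intro B₁ hB₁ B₂ hB₂ h
  have hsup : B₁.sup id = B₂.sup id := by
    simpa only [sup_bump, Nat.add_right_cancel_iff] using congrArg (·.sup id) h
  have herase : B₁.erase (B₁.sup id) = B₂.erase (B₂.sup id) := by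
    refine eq_of_insert_eq_insert (sup_add_notMem_erase B₁ c) ?_ ?_
    · rw [hsup]
      exact sup_add_notMem_erase B₂ c
    · rw [bump, bump] at h
      rwa [hsup] at h ⊢
  calc B₁ = insert (B₁.sup id) (B₁.erase (B₁.sup id)) := (insert_erase (sup_id_mem hB₁)).symm
    _ = insert (B₂.sup id) (B₂.erase (B₂.sup id)) := by rw [herase, hsup]
    _ = B₂ := insert_erase (sup_id_mem hB₂)

lemma bump_ne_pair (B : Finset ℕ) {c : ℕ} (hc : 3 < c) :
    bump c B ≠ {3, c - 3} := by
  intro h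
  have hmem : B.sup id + c ∈ bump c B := mem_insert_self _ _
  rw [h, mem_insert, mem_singleton] at hmem
  omega

lemma eight_le_two_pow_of_five_le {a : ℕ} (h : 5 ≤ 2 ^ a) : 8 ≤ 2 ^ a := by
  rcases lt_or_ge a 3 with ha | ha
  · interval_cases a <;> omega
  · exact (Nat.pow_le_pow_right two_pos ha).trans' (by norm_num)

lemma two_pow_notMem_pair {a : ℕ} (ha : 8 ≤ 2 ^ a) (e : ℕ) :
    2 ^ e ∉ ({3, 2 ^ a - 3} : Finset ℕ) := by
  have ha0 : a ≠ 0 := by rintro rfl; omega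
  have hpa : 2 ^ a = 2 * 2 ^ (a - 1) := by rw [← pow_succ', Nat.sub_add_cancel (by omega)]
  rw [mem_insert, mem_singleton]
  rcases e with _ | e
  · omega
  · rw [pow_succ]
    omega

section Shift

variable {j : ℕ} {A : Finset ℕ}

abbrev CarryBlocked (j : ℕ) (A : Finset ℕ) : Prop := 2 ^ carryExp A = j ∨ 2 ^ carryExp A = j + 1

def shift (j : ℕ) (A : Finset ℕ) : Finset ℕ :=
  if CarryBlocked j A then
    if (carryRest A).Nonempty then bump (2 ^ carryExp A) (carryRest A)
    else {3, 2 ^ carryExp A - 3}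
  else carry A

lemma shift_of_not_blocked (hb : ¬CarryBlocked j A) : shift j A = carry A := if_neg hb

lemma shift_of_blocked_of_nonempty (hb : CarryBlocked j A) (hB : (carryRest A).Nonempty) :
    shift j A = bump (2 ^ carryExp A) (carryRest A) := by
  rw [shift, if_pos hb, if_pos hB]

lemma shift_of_blocked_of_empty (hb : CarryBlocked j A) (hB : carryRest A = ∅) :
    shift j A = {3, 2 ^ carryExp A - 3} := by
  rw [shift, if_pos hb, if_neg (not_nonempty_iff_eq_empty.mpr hB)]

lemma eight_le_of_blocked_of_carryRest_eq_empty (hb : CarryBlocked j A) (hB : carryRest A = ∅)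
    (hbig : 8 ≤ ∑ x ∈ A, x + j) : 8 ≤ 2 ^ carryExp A ∧ ∑ x ∈ A, x + 1 = 2 ^ carryExp A := by
  have hsum := sum_carryRest_add A
  rw [hB, sum_empty, zero_add] at hsum
  exact ⟨eight_le_two_pow_of_five_le (by omega), hsum.symm⟩

lemma shift_spec (h0 : 0 ∉ A) (hjA : j ∉ A) (hj1A : j + 1 ∉ A) (hbig : 8 ≤ ∑ x ∈ A, x + j) :
    0 ∉ shift j A ∧ j ∉ shift j A ∧ j + 1 ∉ shift j A ∧
      ∑ x ∈ shift j A, x = ∑ x ∈ A, x + 1 := by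
  by_cases hb : CarryBlocked j A
  · by_cases hB : (carryRest A).Nonempty
    · rw [shift_of_blocked_of_nonempty hb hB]
      have hm := sup_id_mem hB
      have hm0 : (carryRest A).sup id ≠ 0 := fun h => h0 (carryRest_subset A (h ▸ hm))
      have hm1 : (carryRest A).sup id ≠ 1 :=
        fun h => two_pow_notMem_carryRest (Nat.zero_le _) (h ▸ hm)
      have hA : ∀ {x}, x ∈ (carryRest A).erase ((carryRest A).sup id) → x ∈ A :=
        fun hx => carryRest_subset A (mem_of_mem_erase hx)
      simp only [bump, mem_insert, not_or]
      exact ⟨⟨by omega, fun h => h0 (hA h)⟩, ⟨by omega, fun h => hjA (hA h)⟩,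
        ⟨by omega, fun h => hj1A (hA h)⟩, by rw [← bump, sum_bump hB, sum_carryRest_add]⟩
    · rw [not_nonempty_iff_eq_empty] at hB
      obtain ⟨h8, hsum⟩ := eight_le_of_blocked_of_carryRest_eq_empty hb hB hbig
      rw [shift_of_blocked_of_empty hb hB, sum_pair (by omega)]
      simp only [mem_insert, mem_singleton]
      omega
  · rw [shift_of_not_blocked hb]
    simp only [CarryBlocked, carry, mem_insert, not_or] at hb ⊢
    exact ⟨⟨by positivity, fun h => h0 (carryRest_subset A h)⟩,
      ⟨Ne.symm hb.1, fun h => hjA (carryRest_subset A h)⟩,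
      ⟨Ne.symm hb.2, fun h => hj1A (carryRest_subset A h)⟩, by rw [← carry, sum_carry]⟩

lemma carryExp_le_of_blocked {A' : Finset ℕ} (hjA : j ∉ A) (hj1A : j + 1 ∉ A)
    (hb : CarryBlocked j A') : carryExp A ≤ carryExp A' :=
  not_lt.mp fun h => by
    rcases hb with hb | hb
    · exact hjA (hb ▸ two_pow_mem_of_lt_carryExp h)
    · exact hj1A (hb ▸ two_pow_mem_of_lt_carryExp h)

lemma two_pow_notMem_shift_of_blocked (h0 : 0 ∉ A) (hbig : 8 ≤ ∑ x ∈ A, x + j)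
    (hb : CarryBlocked j A) {e : ℕ} (he : e ≤ carryExp A) :
    2 ^ e ∉ shift j A := by
  by_cases hB : (carryRest A).Nonempty
  · rw [shift_of_blocked_of_nonempty hb hB, bump, mem_insert, not_or]
    have hm0 : (carryRest A).sup id ≠ 0 := fun h => h0 (carryRest_subset A (h ▸ sup_id_mem hB))
    have hpow : 2 ^ e ≤ 2 ^ carryExp A := Nat.pow_le_pow_right two_pos he
    exact ⟨by omega, fun h => two_pow_notMem_carryRest he (mem_of_mem_erase h)⟩
  · rw [not_nonempty_iff_eq_empty] at hB
    rw [shift_of_blocked_of_empty hb hB]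
    exact two_pow_notMem_pair (eight_le_of_blocked_of_carryRest_eq_empty hb hB hbig).1 e

lemma carryRest_eq_of_shift_eq {A' : Finset ℕ} (hb : CarryBlocked j A) (hb' : CarryBlocked j A')
    (he : carryExp A = carryExp A') (hbig : 8 ≤ ∑ x ∈ A, x + j) (hbig' : 8 ≤ ∑ x ∈ A', x + j)
    (h : shift j A = shift j A') : carryRest A = carryRest A' := by
  by_cases hB : (carryRest A).Nonempty <;> by_cases hB' : (carryRest A').Nonempty
  · rw [shift_of_blocked_of_nonempty hb hB, shift_of_blocked_of_nonempty hb' hB', he] at h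
    exact bump_injOn _ hB hB' h
  · rw [not_nonempty_iff_eq_empty] at hB'
    have h8 := (eight_le_of_blocked_of_carryRest_eq_empty hb' hB' hbig').1
    rw [shift_of_blocked_of_nonempty hb hB, shift_of_blocked_of_empty hb' hB', he] at h
    exact absurd h (bump_ne_pair _ (by omega))
  · rw [not_nonempty_iff_eq_empty] at hB
    have h8 := (eight_le_of_blocked_of_carryRest_eq_empty hb hB hbig).1
    rw [shift_of_blocked_of_empty hb hB, shift_of_blocked_of_nonempty hb' hB', ← he] at h
    exact absurd h.symm (bump_ne_pair _ (by omega))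
  · rw [not_nonempty_iff_eq_empty] at hB hB'
    rw [hB, hB']

lemma shift_injOn :
    Set.InjOn (shift j) {A | 0 ∉ A ∧ j ∉ A ∧ j + 1 ∉ A ∧ 8 ≤ ∑ x ∈ A, x + j} := by
  rintro A₁ ⟨h0₁, hj₁, hj1₁, hbig₁⟩ A₂ ⟨h0₂, hj₂, hj1₂, hbig₂⟩ h
  by_cases hb₁ : CarryBlocked j A₁ <;> by_cases hb₂ : CarryBlocked j A₂
  · have he : carryExp A₁ = carryExp A₂ :=
      le_antisymm (carryExp_le_of_blocked hj₁ hj1₁ hb₂) (carryExp_le_of_blocked hj₂ hj1₂ hb₁)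
    exact eq_of_carryExp_eq_of_carryRest_eq he
      (carryRest_eq_of_shift_eq hb₁ hb₂ he hbig₁ hbig₂ h)
  · rw [shift_of_not_blocked hb₂] at h
    exact absurd (h ▸ mem_insert_self _ _) (two_pow_notMem_shift_of_blocked h0₁ hbig₁ hb₁
      (carryExp_le_of_blocked hj₂ hj1₂ hb₁))
  · rw [shift_of_not_blocked hb₁] at h
    exact absurd (h ▸ mem_insert_self _ _) (two_pow_notMem_shift_of_blocked h0₂ hbig₂ hb₂
      (carryExp_le_of_blocked hj₁ hj1₁ hb₂))
  · rw [shift_of_not_blocked hb₁, shift_of_not_blocked hb₂] at h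
    exact carry_injective h

end Shift

section Partitions

variable {j n : ℕ} {s : Finset ℕ}

def distinctParts (n : ℕ) : Finset (Finset ℕ) :=
  (range (n + 1)).powerset.filter fun s => 0 ∉ s ∧ ∑ x ∈ s, x = n

lemma mem_distinctParts : s ∈ distinctParts n ↔ 0 ∉ s ∧ ∑ x ∈ s, x = n := by
  refine ⟨fun h => (mem_filter.mp h).2, fun h => mem_filter.mpr ⟨mem_powerset.mpr ?_, h⟩⟩
  intro x hx
  have := single_le_sum (fun i _ => Nat.zero_le i) hx
  exact mem_range.mpr (by omega)

def numWithPart (j n : ℕ) : ℕ := #{s ∈ distinctParts n | j ∈ s}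

def lowerPart (j : ℕ) (s : Finset ℕ) : Finset ℕ :=
  if j ∈ s then s else insert j (shift j (s.erase (j + 1)))

lemma lowerPart_of_mem (h : j ∈ s) : lowerPart j s = s := if_pos h

lemma lowerPart_of_notMem (h : j ∉ s) :
    lowerPart j s = insert j (shift j (s.erase (j + 1))) :=
  if_neg h

lemma erase_succ_spec (hs : s ∈ distinctParts n) (hj1 : j + 1 ∈ s) (hjs : j ∉ s) :
    0 ∉ s.erase (j + 1) ∧ j ∉ s.erase (j + 1) ∧ j + 1 ∉ s.erase (j + 1) ∧
      ∑ x ∈ s.erase (j + 1), x + (j + 1) = n := by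
  obtain ⟨h0, hsum⟩ := mem_distinctParts.mp hs
  exact ⟨fun h => h0 (mem_of_mem_erase h), fun h => hjs (mem_of_mem_erase h), notMem_erase _ _,
    by rw [sum_erase_add s _ hj1, hsum]⟩

lemma lowerPart_mem (hj : 1 ≤ j) (hn : 9 ≤ n) (hs : s ∈ distinctParts n) (hj1 : j + 1 ∈ s) :
    lowerPart j s ∈ distinctParts n ∧ j ∈ lowerPart j s := by
  by_cases hjs : j ∈ s
  · rw [lowerPart_of_mem hjs]
    exact ⟨hs, hjs⟩
  obtain ⟨h0, hjA, hj1A, hsum⟩ := erase_succ_spec hs hj1 hjs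
  obtain ⟨h0', hj', -, hsum'⟩ := shift_spec h0 hjA hj1A (by omega)
  rw [lowerPart_of_notMem hjs, mem_distinctParts, mem_insert, not_or, sum_insert hj', hsum']
  exact ⟨⟨⟨by omega, h0'⟩, by omega⟩, mem_insert_self _ _⟩

lemma succ_notMem_lowerPart (hn : 9 ≤ n) (hs : s ∈ distinctParts n) (hj1 : j + 1 ∈ s)
    (hjs : j ∉ s) : j + 1 ∉ lowerPart j s := by
  obtain ⟨h0, hjA, hj1A, hsum⟩ := erase_succ_spec hs hj1 hjs
  rw [lowerPart_of_notMem hjs, mem_insert, not_or]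
  exact ⟨by omega, (shift_spec h0 hjA hj1A (by omega)).2.2.1⟩

lemma lowerPart_injOn (hn : 9 ≤ n) :
    Set.InjOn (lowerPart j) {s | s ∈ distinctParts n ∧ j + 1 ∈ s} := by
  rintro s₁ ⟨hs₁, hm₁⟩ s₂ ⟨hs₂, hm₂⟩ h
  by_cases hj₁ : j ∈ s₁ <;> by_cases hj₂ : j ∈ s₂
  · rwa [lowerPart_of_mem hj₁, lowerPart_of_mem hj₂] at h
  · rw [lowerPart_of_mem hj₁] at h
    exact absurd (h ▸ hm₁) (succ_notMem_lowerPart hn hs₂ hm₂ hj₂)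
  · rw [lowerPart_of_mem hj₂] at h
    exact absurd (h ▸ hm₂) (succ_notMem_lowerPart hn hs₁ hm₁ hj₁)
  obtain ⟨h0₁, hjA₁, hj1A₁, hsum₁⟩ := erase_succ_spec hs₁ hm₁ hj₁
  obtain ⟨h0₂, hjA₂, hj1A₂, hsum₂⟩ := erase_succ_spec hs₂ hm₂ hj₂
  rw [lowerPart_of_notMem hj₁, lowerPart_of_notMem hj₂] at h
  have hA := shift_injOn ⟨h0₁, hjA₁, hj1A₁, by omega⟩ ⟨h0₂, hjA₂, hj1A₂, by omega⟩
    (eq_of_insert_eq_insert (shift_spec h0₁ hjA₁ hj1A₁ (by omega)).2.1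
      (shift_spec h0₂ hjA₂ hj1A₂ (by omega)).2.1 h)
  rw [← insert_erase hm₁, ← insert_erase hm₂, hA]

lemma numWithPart_succ_le (hj : 1 ≤ j) (hn : 9 ≤ n) : numWithPart (j + 1) n ≤ numWithPart j n :=
  card_le_card_of_injOn (lowerPart j)
    (fun s hs => by
      obtain ⟨hs, hj1⟩ := mem_filter.mp hs
      exact mem_filter.mpr (lowerPart_mem hj hn hs hj1))
    ((lowerPart_injOn hn).mono fun s hs => mem_filter.mp hs)

lemma numWithPart_antitoneOn (hn : 9 ≤ n) : AntitoneOn (numWithPart · n) {j | 1 ≤ j} :=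
  antitoneOn_nat_Ici_of_succ_le fun _ hj => numWithPart_succ_le hj hn

end Partitions

lemma sum_distincts_eq_sum_distinctParts {M : Type*} [AddCommMonoid M] (n : ℕ)
    (f : Finset ℕ → M) :
    ∑ p ∈ Nat.Partition.distincts n, f p.parts.toFinset = ∑ s ∈ distinctParts n, f s := by
  refine sum_bij' (fun p _ => p.parts.toFinset)
    (fun s hs => ⟨s.val, fun hi => Nat.pos_of_ne_zero fun h0 => (mem_distinctParts.mp hs).1
      (h0 ▸ hi), by rw [sum_val]; exact (mem_distinctParts.mp hs).2⟩) ?_ ?_ ?_ ?_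
    (fun _ _ => rfl)
  · intro p hp
    refine mem_distinctParts.mpr ⟨fun h => (p.parts_pos (Multiset.mem_toFinset.mp h)).ne' rfl, ?_⟩
    refine (sum_val _).symm.trans ?_
    rw [Multiset.toFinset_val, (mem_filter.mp hp).2.dedup, p.parts_sum]
  · intro s _
    simp [Nat.Partition.distincts, s.nodup]
  · intro p hp
    ext1
    exact (mem_filter.mp hp).2.dedup
  · intro s _
    exact val_toFinset s

lemma D_eq_sum_card_filter (r t n : ℕ) :
    D r t n = ∑ s ∈ distinctParts n, #{x ∈ s | x % t = r % t} := by
  rw [D, ← sum_distincts_eq_sum_distinctParts]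
  refine sum_congr rfl fun p hp => ?_
  rw [card_def, filter_val, Multiset.toFinset_val, (mem_filter.mp hp).2.dedup]

lemma card_filter_mod_eq {r t n : ℕ} {s : Finset ℕ} (hs : s ∈ distinctParts n) (hr : 1 ≤ r)
    (hrt : r ≤ t) : #{x ∈ s | x % t = r % t} = #{k ∈ range (n + 1) | r + t * k ∈ s} := by
  have ht : t ≠ 0 := by omega
  rw [← card_image_of_injective {k ∈ range (n + 1) | r + t * k ∈ s}
    ((add_right_injective r).comp (mul_right_injective₀ ht))]
  congr 1
  ext x
  simp only [mem_filter, mem_image, mem_range, Function.comp_apply]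
  constructor
  · rintro ⟨hx, hxr⟩
    obtain ⟨h0, hsum⟩ := mem_distinctParts.mp hs
    have hxn : x ≤ n := hsum ▸ single_le_sum (fun i _ => Nat.zero_le i) hx
    have hx0 : x ≠ 0 := fun h => h0 (h ▸ hx)
    have hrx : r ≤ x := by
      by_contra! hxr'
      rw [Nat.mod_eq_of_lt (by omega : x < t)] at hxr
      rcases hrt.lt_or_eq with h | rfl
      · rw [Nat.mod_eq_of_lt h] at hxr
        omega
      · rw [Nat.mod_self] at hxr
        omega
    obtain ⟨k, hk⟩ := (Nat.modEq_iff_dvd' hrx).mp hxr.symm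
    have : k ≤ t * k := Nat.le_mul_of_pos_left k (Nat.pos_of_ne_zero ht)
    exact ⟨k, ⟨by omega, by rwa [show r + t * k = x by omega]⟩, by omega⟩
  · rintro ⟨k, ⟨-, hk⟩, rfl⟩
    exact ⟨hk, Nat.add_mul_mod_self_left r t k⟩

lemma D_eq_sum_numWithPart {r t : ℕ} (n : ℕ) (hr : 1 ≤ r) (hrt : r ≤ t) :
    D r t n = ∑ k ∈ range (n + 1), numWithPart (r + t * k) n := by
  rw [D_eq_sum_card_filter, sum_congr rfl fun s hs => card_filter_mod_eq hs hr hrt]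
  exact sum_card_bipartiteAbove_eq_sum_card_bipartiteBelow (fun s k => r + t * k ∈ s)

end DistinctParts

open DistinctParts in
theorem stmt2_general (t : ℕ) (r s : ℕ)
    (hr : 1 ≤ r) (hrs : r < s) (hst : s ≤ t) (n : ℕ) (hn : 8 < n) :
    D s t n ≤ D r t n := by
  rw [D_eq_sum_numWithPart n (hr.trans hrs.le) hst, D_eq_sum_numWithPart n hr (hrs.le.trans hst)]
  exact sum_le_sum fun k _ => numWithPart_antitoneOn hn (show 1 ≤ r + t * k by omega)
    (show 1 ≤ s + t * k by omega) (by omega)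

theorem stmt2 (t : ℕ) (ht2 : 2 ≤ t) (ht10 : t ≤ 10) (r s : ℕ)
    (hr : 1 ≤ r) (hrs : r < s) (hst : s ≤ t) (n : ℕ) (hn : 8 < n) :
    D s t n ≤ D r t n :=
  stmt2_general t r s hr hrs hst n hn
end

section
/- Let 0 < r ≤ t be integers. Then for every complex number q with |q| < 1, Σ_{n≥0} D_{r,t}(n) qⁿ = ξ(q) · L_{r,t}(q); that is, the generating function of D_{r,t}(n) equals ∏_{n≥1}(1 + qⁿ) · Σ_{k≥0} q^{kt+r}/(1 + q^{kt+r}). -/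
/-- `ξ(q) = ∏_{n ≥ 1} (1 + qⁿ)`. -/
noncomputable def xi (q : ℂ) : ℂ := ∏' n : ℕ, (1 + q ^ (n + 1))

/-- `L_{r,t}(q) = Σ_{k ≥ 0} q^{kt+r}/(1 + q^{kt+r})`. -/
noncomputable def L (r t : ℕ) (q : ℂ) : ℂ :=
  ∑' k : ℕ, q ^ (k * t + r) / (1 + q ^ (k * t + r))

/-!
Expanding `ξ(q)` gives `∑_S q^(ΣS)` over finite sets `S` of positive integers, i.e. over
partitions into distinct parts, so `∑ D_{r,t}(n) qⁿ` sums `q^(ΣS)` over sets `S` with one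
marked element `b ≡ r (mod t)`. Removing the marked element leaves a set avoiding `b`, and those
sets contribute `ξ(q) / (1 + q^b)`. Summing `q^b ξ(q) / (1 + q^b)` over `b = kt + r` gives
`ξ(q) L_{r,t}(q)`.
-/

open Finset Function

section FinsetExpansion

variable {ι 𝕜 : Type*} [NormedField 𝕜] [CompleteSpace 𝕜] {f : ι → 𝕜}

theorem hasSum_prod_tprod_one_add (hf : Summable (‖f ·‖)) :
    HasSum (fun S : Finset ι => ∏ i ∈ S, f i) (∏' i, (1 + f i)) := by
  rw [tprod_one_add (summable_finsetProd_of_summable_norm hf)]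
  exact (summable_finsetProd_of_summable_norm hf).hasSum

/-- Dividing out the factor `1 + f i` amounts to replacing `f i` by `0`, which kills exactly the
terms of the expansion indexed by sets containing `i`. -/
theorem hasSum_prod_of_notMem (hf : Summable (‖f ·‖)) {i : ι} (hi : 1 + f i ≠ 0) :
    HasSum (fun S : {S : Finset ι // i ∉ S} => ∏ j ∈ S.1, f j)
      ((∏' j, (1 + f j)) / (1 + f i)) := by
  classical
  set g := update f i 0
  have hg : Summable (‖g ·‖) :=
    hf.of_nonneg_of_le (fun _ => norm_nonneg _) fun j => by
      by_cases hj : j = i <;> simp [g, hj]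
  have hfg : ∏' j, (1 + f j) = (1 + f i) * ∏' j, (1 + g j) := by
    have hmul : Multipliable (update (1 + f ·) i 1) := by
      convert multipliable_one_add_of_summable hg using 1
      ext j; by_cases hj : j = i <;> simp [g, hj]
    rw [Multipliable.tprod_eq_mul_tprod_ite' i hmul]
    congr 2 with j
    by_cases hj : j = i <;> simp [g, hj]
  have hsupp : support (fun S : Finset ι => ∏ j ∈ S, g j) ⊆ {S | i ∉ S} := fun S hS hiS =>
    hS (prod_eq_zero hiS (update_self i 0 f))
  rw [hfg, mul_div_cancel_left₀ _ hi]
  refine ((hasSum_subtype_iff_of_support_subset hsupp).2 (hasSum_prod_tprod_one_add hg))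
    |>.congr_fun fun S => prod_congr rfl fun j hj => ?_
  exact (update_of_ne (ne_of_mem_of_not_mem hj S.2) 0 f).symm

def markedEquiv [DecidableEq ι] (p : ι → Prop) [DecidablePred p] :
    (Σ i : {i // p i}, {S : Finset ι // i.1 ∉ S}) ≃
      Σ S : Finset ι, {i // i ∈ S.filter p} where
  toFun x := ⟨insert x.1.1 x.2.1, x.1.1, mem_filter.2 ⟨mem_insert_self _ _, x.1.2⟩⟩
  invFun y := ⟨⟨y.2.1, (mem_filter.1 y.2.2).2⟩, y.1.erase y.2.1, notMem_erase _ _⟩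
  left_inv := fun ⟨_, _, hS⟩ => Sigma.subtype_ext rfl (erase_insert hS)
  right_inv := fun ⟨_, _, hi⟩ => Sigma.subtype_ext (insert_erase (mem_filter.1 hi).1) rfl

theorem hasSum_card_filter_mul_prod (hf : Summable (‖f ·‖)) (hf₁ : ∀ i, 1 + f i ≠ 0)
    (p : ι → Prop) [DecidablePred p] :
    HasSum (fun S : Finset ι => (#(S.filter p) : 𝕜) * ∏ i ∈ S, f i)
      ((∏' i, (1 + f i)) * ∑' i : {i // p i}, f i / (1 + f i)) := by
  classical
  set F := fun x : Σ i : {i // p i}, {S : Finset ι // i.1 ∉ S} => f x.1 * ∏ j ∈ x.2.1, f j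
  have hinj : Injective fun x : Σ i : {i // p i}, {S : Finset ι // i.1 ∉ S} => (x.1.1, x.2.1) :=
    fun ⟨_, _, _⟩ ⟨_, _, _⟩ h => Sigma.subtype_ext (Subtype.ext (Prod.ext_iff.1 h).1)
      (Prod.ext_iff.1 h).2
  have hprod : Summable fun S : Finset ι => ‖∏ i ∈ S, f i‖ := by
    simpa only [norm_prod] using
      summable_finsetProd_of_summable_nonneg (fun _ => norm_nonneg _) hf
  have hF : Summable F := ((hf.mul_norm hprod).comp_injective hinj).of_norm
  have hF_sum : HasSum F ((∏' i, (1 + f i)) * ∑' i : {i // p i}, f i / (1 + f i)) := by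
    have hfiber (i : {i // p i}) := (hasSum_prod_of_notMem hf (hf₁ i)).mul_left (f i)
    convert hF.hasSum using 1
    rw [← tsum_mul_left, ← (hF.hasSum.sigma hfiber).tsum_eq]
    simp_rw [mul_div_left_comm]
  have hmarked : HasSum (fun y : Σ S : Finset ι, {i // i ∈ S.filter p} => ∏ i ∈ y.1, f i)
      ((∏' i, (1 + f i)) * ∑' i : {i // p i}, f i / (1 + f i)) := by
    refine (markedEquiv p).hasSum_iff.1 (hF_sum.congr_fun fun x => ?_)
    exact prod_insert x.2.2
  refine hmarked.sigma fun S => ?_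
  convert hasSum_fintype (fun _ : {i // i ∈ S.filter p} => ∏ i ∈ S, f i)
  simp

end FinsetExpansion

namespace Nat.Partition

def ofFinsetPNat (S : Finset ℕ+) : (∑ i ∈ S, (i : ℕ)).Partition where
  parts := S.val.map (↑)
  parts_pos hi := by
    obtain ⟨i, -, rfl⟩ := Multiset.mem_map.1 hi
    exact i.pos
  parts_sum := rfl

theorem sigma_distincts_ext {x y : Σ n, distincts n} (h : x.2.1.parts = y.2.1.parts) :
    x = y := by
  obtain ⟨n, p, hp⟩ := x
  obtain ⟨m, p', hp'⟩ := y
  obtain rfl : n = m := p.parts_sum.symm.trans ((congrArg Multiset.sum h).trans p'.parts_sum)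
  obtain rfl : p = p' := Nat.Partition.ext h
  rfl

def finsetPNatEquivSigmaDistincts : Finset ℕ+ ≃ Σ n, distincts n where
  toFun S := ⟨_, ofFinsetPNat S, mem_filter.2 ⟨mem_univ _, S.nodup.map PNat.coe_injective⟩⟩
  invFun x := x.2.1.parts.toFinset.subtype (0 < ·)
  left_inv S := by
    ext i
    simpa [ofFinsetPNat] using
      ⟨fun ⟨j, hj, h⟩ => PNat.coe_injective h ▸ hj, fun h => ⟨i, h, rfl⟩⟩
  right_inv x := by
    refine sigma_distincts_ext ?_
    obtain ⟨n, p, hp⟩ := x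
    show ((p.parts.toFinset.subtype (0 < ·)).map (Embedding.subtype _)).val = p.parts
    rw [subtype_map_of_mem fun i hi => p.parts_pos (Multiset.mem_toFinset.1 hi),
      Multiset.toFinset_val, Multiset.dedup_eq_self.2 (mem_filter.1 hp).2]

theorem hasSum_sum_distincts {α : Type*} [AddCommMonoid α] [TopologicalSpace α]
    [ContinuousAdd α] [RegularSpace α] {g : Multiset ℕ → α} {a : α}
    (h : HasSum (fun S : Finset ℕ+ => g (S.val.map (↑))) a) :
    HasSum (fun n => ∑ p ∈ distincts n, g p.parts) a := by
  have hσ : HasSum (fun x : Σ n, distincts n => g x.2.1.parts) a :=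
    finsetPNatEquivSigmaDistincts.hasSum_iff.1 h
  refine hσ.sigma fun n => ?_
  rw [← sum_coe_sort]
  exact hasSum_fintype _

end Nat.Partition

section GeneratingFunction

variable {r t : ℕ} {q : ℂ}

noncomputable def arithProgEquiv (hr : 0 < r) (hrt : r ≤ t) :
    ℕ ≃ {n : ℕ+ // (n : ℕ) % t = r % t} := by
  have ht : 0 < t := hr.trans_le hrt
  refine Equiv.ofBijective (fun k => ⟨⟨k * t + r, by omega⟩, Nat.mul_add_mod' k t r⟩)
    ⟨fun k l h => ?_, fun ⟨n, hn⟩ => ?_⟩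
  · have hkl : k * t + r = l * t + r := congrArg (fun n : {n : ℕ+ // _} => (n : ℕ)) h
    exact Nat.eq_of_mul_eq_mul_right ht (by omega)
  · have hrn : r ≤ n := by
      rcases hrt.lt_or_eq with hrt | rfl
      · rw [Nat.mod_eq_of_lt hrt] at hn
        exact hn ▸ Nat.mod_le n t
      · exact Nat.le_of_dvd n.pos (Nat.dvd_of_mod_eq_zero (hn.trans (Nat.mod_self r)))
    obtain ⟨k, hk⟩ := (Nat.modEq_iff_dvd' hrn).1 hn.symm
    refine ⟨k, Subtype.ext (PNat.coe_injective ?_)⟩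
    simp only [PNat.mk_coe]
    rw [mul_comm] at hk
    omega

theorem summable_norm_pow_pnat (hq : ‖q‖ < 1) :
    Summable fun n : ℕ+ => ‖q ^ (n : ℕ)‖ := by
  simpa only [norm_pow, comp_def] using
    (summable_geometric_of_lt_one (norm_nonneg q) hq).comp_injective PNat.coe_injective

theorem one_add_pow_ne_zero (hq : ‖q‖ < 1) (n : ℕ+) : 1 + q ^ (n : ℕ) ≠ 0 := by
  have hlt : ‖-q ^ (n : ℕ)‖ < 1 := by
    rw [norm_neg, norm_pow]
    exact pow_lt_one₀ (norm_nonneg q) hq n.ne_zero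
  simpa using (isUnit_one_sub_of_norm_lt_one hlt).ne_zero

theorem xi_eq_tprod_pnat : xi q = ∏' n : ℕ+, (1 + q ^ (n : ℕ)) :=
  (tprod_pnat_eq_tprod_succ (f := fun n => 1 + q ^ n)).symm

theorem L_eq_tsum_pnat (hr : 0 < r) (hrt : r ≤ t) :
    L r t q = ∑' n : {n : ℕ+ // (n : ℕ) % t = r % t}, q ^ (n : ℕ) / (1 + q ^ (n : ℕ)) :=
  (arithProgEquiv hr hrt).tsum_eq (fun n => q ^ (n : ℕ) / (1 + q ^ (n : ℕ)))

theorem hasSum_D_mul_pow {a : ℂ} (h : HasSum (fun S : Finset ℕ+ =>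
    (#(S.filter fun n : ℕ+ => (n : ℕ) % t = r % t) : ℂ) * ∏ n ∈ S, q ^ (n : ℕ)) a) :
    HasSum (fun n => (D r t n : ℂ) * q ^ n) a := by
  let g (s : Multiset ℕ) : ℂ := (s.filter (· % t = r % t)).card * q ^ s.sum
  refine (Nat.Partition.hasSum_sum_distincts (g := g) (h.congr_fun fun S => ?_)).congr_fun
    fun n => ?_
  · simp only [g, Multiset.filter_map, Multiset.card_map, prod_pow_eq_pow_sum]
    rfl
  · rw [D, Nat.cast_sum, sum_mul]
    exact sum_congr rfl fun p _ => by simp only [g, p.parts_sum]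

end GeneratingFunction

theorem stmt4 (r t : ℕ) (hr : 0 < r) (hrt : r ≤ t) (q : ℂ) (hq : ‖q‖ < 1) :
    ∑' n : ℕ, (D r t n : ℂ) * q ^ n = xi q * L r t q := by
  have key := hasSum_card_filter_mul_prod (summable_norm_pow_pnat hq) (one_add_pow_ne_zero hq)
    fun n : ℕ+ => (n : ℕ) % t = r % t
  rw [← xi_eq_tprod_pnat, ← L_eq_tsum_pnat hr hrt] at key
  exact (hasSum_D_mul_pow key).tsum_eq
end

section
/- For every complex number z with Re(z) > 0, Σ_{n≥1} Log(1 + e^{−nz}) = z · ( Σ_{m≥0} B((2m+1)z) − Σ_{m≥0} B((2m+2)z) ), where Log denotes the principal branch of the logarithm. (The left-hand side is a branch of log ξ(e^{−z}).) -/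
/-!
Put `q = e^{-z}`, so `‖q‖ < 1`. Expanding each `Log(1 + q^(n+1))` in its Taylor series gives the
double series `∑ₙ ∑ₖ (-1)^k q^((k+1)(n+1)) / (k+1)`, which converges absolutely. Summing it over
`n` first turns it into the Lambert-type series `∑ₖ (-1)^k q^(k+1) / ((k+1)(1 - q^(k+1)))`, whose
`k`-th term is `(-1)^k z B((k+1)z)`; splitting it into even and odd `k` gives the two sums of `B`.
-/

/-- `B(w) = e^{-w}/(w(1 - e^{-w}))`. -/
noncomputable def Bfun (w : ℂ) : ℂ :=
  Complex.exp (-w) / (w * (1 - Complex.exp (-w)))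

open Complex

theorem tsum_neg_one_pow_mul_eq_sub {α : Type*} [Ring α] [UniformSpace α]
    [IsUniformAddGroup α] [CompleteSpace α] [T2Space α] {f : ℕ → α}
    (hf : Summable fun k => (-1) ^ k * f k) :
    ∑' k, (-1) ^ k * f k = ∑' m, f (2 * m) - ∑' m, f (2 * m + 1) := by
  have heven : Summable fun m => (-1) ^ (2 * m) * f (2 * m) :=
    hf.comp_injective (i := fun m => 2 * m) (fun a b h => by simpa using h)
  have hodd : Summable fun m => (-1) ^ (2 * m + 1) * f (2 * m + 1) :=
    hf.comp_injective (i := fun m => 2 * m + 1) (fun a b h => by simpa using h)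
  rw [← tsum_even_add_odd (f := fun k => (-1) ^ k * f k) heven hodd, sub_eq_add_neg, ← tsum_neg]
  simp [pow_succ, pow_mul]

section LogOneAddPow

variable {q : ℂ}

theorem summable_neg_one_pow_mul_pow_mul_div (hq : ‖q‖ < 1) :
    Summable fun p : ℕ × ℕ => (-1) ^ p.1 * q ^ ((p.1 + 1) * (p.2 + 1)) / (p.1 + 1) := by
  have hq0 := norm_nonneg q
  refine Summable.of_norm_bounded ((summable_geometric_of_lt_one hq0 hq).mul_of_nonneg
    (summable_geometric_of_lt_one hq0 hq) (fun _ => by positivity) (fun _ => by positivity)) ?_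
  rintro ⟨k, n⟩
  have hk : (1 : ℝ) ≤ ‖(k : ℂ) + 1‖ := by
    rw [← Nat.cast_succ, Complex.norm_natCast]; exact_mod_cast k.succ_pos
  calc ‖(-1) ^ k * q ^ ((k + 1) * (n + 1)) / (k + 1)‖
      ≤ ‖q‖ ^ ((k + 1) * (n + 1)) := by
        rw [norm_div, norm_mul, norm_pow, norm_pow, norm_neg, norm_one, one_pow, one_mul]
        exact div_le_self (by positivity) hk
    _ ≤ ‖q‖ ^ (k + n) := pow_le_pow_of_le_one hq0 hq.le (by nlinarith)
    _ = ‖q‖ ^ k * ‖q‖ ^ n := pow_add _ _ _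

theorem hasSum_log_one_add (hq : ‖q‖ < 1) :
    HasSum (fun k : ℕ => (-1) ^ k * q ^ (k + 1) / (k + 1)) (log (1 + q)) := by
  simpa [pow_succ] using (hasSum_nat_add_iff' 1).mpr (hasSum_taylorSeries_log hq)

theorem hasSum_log_one_add_pow_succ (hq : ‖q‖ < 1) (n : ℕ) :
    HasSum (fun k : ℕ => (-1) ^ k * q ^ ((k + 1) * (n + 1)) / (k + 1))
      (log (1 + q ^ (n + 1))) := by
  have hqn : ‖q ^ (n + 1)‖ < 1 := by
    rw [norm_pow]; exact pow_lt_one₀ (norm_nonneg q) hq n.succ_ne_zero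
  simpa only [mul_comm _ (n + 1), pow_mul] using hasSum_log_one_add hqn

theorem hasSum_lambert_term (hq : ‖q‖ < 1) (k : ℕ) :
    HasSum (fun n : ℕ => (-1) ^ k * q ^ ((k + 1) * (n + 1)) / (k + 1))
      ((-1) ^ k * q ^ (k + 1) / ((k + 1) * (1 - q ^ (k + 1)))) := by
  have hqk : ‖q ^ (k + 1)‖ < 1 := by
    rw [norm_pow]; exact pow_lt_one₀ (norm_nonneg q) hq k.succ_ne_zero
  have h := ((hasSum_geometric_of_norm_lt_one hqk).mul_left (q ^ (k + 1))).mul_left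
    ((-1) ^ k / ((k : ℂ) + 1))
  rw [← div_eq_mul_inv, div_mul_div_comm] at h
  have hterm (n : ℕ) : (-1) ^ k * q ^ ((k + 1) * (n + 1)) / (k + 1) =
      (-1) ^ k / ((k : ℂ) + 1) * (q ^ (k + 1) * (q ^ (k + 1)) ^ n) := by
    ring
  simpa only [hterm] using h

theorem hasSum_lambert_tsum_log_one_add_pow_succ (hq : ‖q‖ < 1) :
    HasSum (fun k : ℕ => (-1) ^ k * q ^ (k + 1) / ((k + 1) * (1 - q ^ (k + 1))))
      (∑' n : ℕ, log (1 + q ^ (n + 1))) := by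
  have htot := (summable_neg_one_pow_mul_pow_mul_div hq).hasSum
  have hcols := ((Equiv.prodComm ℕ ℕ).hasSum_iff.mpr htot).prod_fiberwise
    (hasSum_log_one_add_pow_succ hq)
  rw [hcols.tsum_eq]
  exact htot.prod_fiberwise (hasSum_lambert_term hq)

end LogOneAddPow

theorem mul_Bfun_mul {z : ℂ} (hz : z ≠ 0) (c : ℂ) :
    z * Bfun (c * z) = exp (-(c * z)) / (c * (1 - exp (-(c * z)))) := by
  rw [Bfun, mul_comm c z, mul_assoc, ← mul_div_assoc, mul_div_mul_left _ _ hz]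

theorem stmt5 (z : ℂ) (hz : 0 < z.re) :
    ∑' n : ℕ, Complex.log (1 + Complex.exp (-((n : ℂ) + 1) * z)) =
      z * ((∑' m : ℕ, Bfun ((2 * (m : ℂ) + 1) * z)) -
           ∑' m : ℕ, Bfun ((2 * (m : ℂ) + 2) * z)) := by
  have hz0 : z ≠ 0 := by rintro rfl; simp at hz
  have hq : ‖exp (-z)‖ < 1 := by rw [norm_exp, neg_re, Real.exp_lt_one_iff]; linarith
  have hpow (k : ℕ) : exp (-((k : ℂ) + 1) * z) = exp (-z) ^ (k + 1) := by
    rw [← exp_nat_mul]; push_cast; ring_nf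
  have hterm (k : ℕ) : (-1) ^ k * exp (-z) ^ (k + 1) / ((k + 1) * (1 - exp (-z) ^ (k + 1))) =
      (-1) ^ k * (z * Bfun (((k : ℂ) + 1) * z)) := by
    rw [mul_Bfun_mul hz0, ← neg_mul, hpow, mul_div_assoc]
  have key := hasSum_lambert_tsum_log_one_add_pow_succ hq
  simp only [hterm] at key
  simp only [← hpow] at key
  rw [← key.tsum_eq, tsum_neg_one_pow_mul_eq_sub key.summable, tsum_mul_left, tsum_mul_left,
    ← mul_sub]
  push_cast
  ring_nf
end

section
/- Let n ≥ 1 be an integer, ν ≤ −1 a real number, and set η := π/√(12n). Define F(w) := w^{−ν−1} · exp( π²/(12w) + (n + 1/24) w ) for w ∈ ℂ off the negative real axis, using the principal branch of w^{−ν−1}. Then (1/(2π)) · ( | ∫_0^∞ F( (η − u) + 10ηi ) du | + | ∫_0^∞ F( (η − u) − 10ηi ) du | ) < 2 · exp( (3π/4) √(n/3) ) · ∫_0^∞ (10 + u)^{−ν−1} e^{−(n + 1/24) u} du. (Equivalently, the modified Bessel function I_ν(π√((n + 1/24)/3)), expressed as a Hankel-type contour integral over the contour D = D_− ∪ D_0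 ∪ D_+ with D_± = {u ± 10ηi : u ≤ η} and D_0 = {η + iv : |v| ≤ 10η}, differs from the integral over D_0 alone by at most 2(2π²/(24n+1))^{ν/2} exp((3π/4)√(n/3)) ∫_0^∞ (10+u)^{−ν−1} e^{−(n+1/24)u} du.) -/
/-!
On the horizontal rays `w = (η - u) ± 10ηi`, `u ≥ 0`, one has `|w| ≤ 10 + u` and
`Re (1/w) = Re w / |w|² ≤ η / (10η)²`, hence
`|F w| ≤ exp (π²/(1200η) + (n + 1/24)η) · (10 + u)^(-ν-1) e^(-(n + 1/24)u)`.
For `η = π/√(12n)` the constant exponent is at most `(3π/4)√(n/3)`, so each ray integral is at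
most `exp ((3π/4)√(n/3))` times the (positive) real integral, and `1/(2π) < 1` makes the
inequality strict.
-/

open Real MeasureTheory

lemma integrableOn_add_rpow_mul_exp_neg_mul {a p c : ℝ} (ha : 0 ≤ a) (hp : -1 < p) (hc : 0 < c) :
    IntegrableOn (fun u => (a + u) ^ p * Real.exp (-c * u)) (Set.Ici 0) := by
  have hg : IntegrableOn (fun x : ℝ => x ^ p * Real.exp (-c * x)) (Set.Ioi a) := by
    have := integrableOn_rpow_mul_exp_neg_mul_rpow (p := 1) hp zero_lt_one hc
    simp only [Real.rpow_one] at this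
    exact this.mono_set (Set.Ioi_subset_Ioi ha)
  have hshift : IntegrableOn (fun u : ℝ => (u + a) ^ p * Real.exp (-c * (u + a))) (Set.Ioi 0) := by
    have := ((measurePreserving_add_right volume a).integrableOn_comp_preimage
      (measurableEmbedding_addRight a)).2 hg
    simpa [Function.comp_def] using this
  rw [integrableOn_Ici_iff_integrableOn_Ioi]
  refine IntegrableOn.congr_fun (hshift.const_mul (Real.exp (c * a))) (fun u _ => ?_)
    measurableSet_Ioi
  rw [add_comm u a, mul_left_comm, ← Real.exp_add]
  ring_nf

lemma setIntegral_add_rpow_mul_exp_neg_mul_pos {a p c : ℝ} (ha : 0 < a) (hp : -1 < p) (hc : 0 < c) :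
    0 < ∫ u in Set.Ici 0, (a + u) ^ p * Real.exp (-c * u) := by
  have hpos : ∀ u ∈ Set.Ici (0 : ℝ), 0 < (a + u) ^ p * Real.exp (-c * u) := fun u hu => by
    have : 0 < a + u := by simp only [Set.mem_Ici] at hu; linarith
    positivity
  rw [setIntegral_pos_iff_support_of_nonneg_ae
    ((ae_restrict_iff' measurableSet_Ici).2 (.of_forall fun u hu => (hpos u hu).le))
    (integrableOn_add_rpow_mul_exp_neg_mul ha.le hp hc)]
  calc (0 : ENNReal) < volume (Set.Ici (0 : ℝ)) := by simp
    _ ≤ _ := measure_mono fun u hu => show u ∈ Function.support _ ∩ _ from ⟨(hpos u hu).ne', hu⟩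

lemma Complex.norm_cpow_ofReal_mul_exp_div_add_mul {w : ℂ} (hw : w ≠ 0) (p A c : ℝ) :
    ‖w ^ (p : ℂ) * Complex.exp (A / w + c * w)‖
      = ‖w‖ ^ p * Real.exp (A * w.re / Complex.normSq w + c * w.re) := by
  rw [norm_mul, Complex.norm_cpow_of_ne_zero hw, Complex.norm_exp]
  simp [Complex.div_re, mul_div_assoc]

lemma Complex.re_div_normSq_le_of_re_le {w : ℂ} {η : ℝ} (hη : 0 ≤ η) (hre : w.re ≤ η)
    (him : w.im ≠ 0) : w.re / Complex.normSq w ≤ η / w.im ^ 2 := by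
  have him2 : 0 < w.im ^ 2 := by positivity
  rw [Complex.normSq_apply, div_le_div_iff₀ (by nlinarith [mul_self_nonneg w.re]) him2]
  rcases le_total w.re 0 with h | h <;> nlinarith [mul_self_nonneg w.re]

section HorizontalRay

variable {p A c η b R : ℝ}

lemma norm_cpow_mul_exp_horizontal_le (hp : 0 ≤ p) (hA : 0 ≤ A) (hη : 0 ≤ η) (hb : b ≠ 0)
    (hR : 0 ≤ R) (hηbR : η ^ 2 + b ^ 2 ≤ R ^ 2) {u : ℝ} (hu : 0 ≤ u) :
    ‖(((η - u : ℝ) : ℂ) + b * Complex.I) ^ (p : ℂ) *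
        Complex.exp (A / (((η - u : ℝ) : ℂ) + b * Complex.I) +
          c * (((η - u : ℝ) : ℂ) + b * Complex.I))‖
      ≤ Real.exp (A * η / b ^ 2 + c * η) * ((R + u) ^ p * Real.exp (-c * u)) := by
  set w : ℂ := ((η - u : ℝ) : ℂ) + b * Complex.I
  have hre : w.re = η - u := by simp [w]
  have him : w.im = b := by simp [w]
  have hw : w ≠ 0 := fun h => hb (by rw [← him, h, Complex.zero_im])
  have hnorm : ‖w‖ ≤ R + u := by
    refine (pow_le_pow_iff_left₀ (norm_nonneg _) (by positivity) two_ne_zero).1 ?_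
    rw [← Complex.normSq_eq_norm_sq, Complex.normSq_apply, ← sq, ← sq, hre, him]
    nlinarith [mul_nonneg hη hu]
  have hexp : A * w.re / Complex.normSq w + c * w.re ≤ A * η / b ^ 2 + c * η + -c * u := by
    have hfrac := mul_le_mul_of_nonneg_left
      (Complex.re_div_normSq_le_of_re_le hη (by linarith) (him ▸ hb)) hA
    rw [him, ← mul_div_assoc, ← mul_div_assoc, hre] at hfrac
    rw [hre]
    linarith
  rw [Complex.norm_cpow_ofReal_mul_exp_div_add_mul hw, mul_left_comm, ← Real.exp_add]
  exact mul_le_mul (Real.rpow_le_rpow (norm_nonneg _) hnorm hp) (Real.exp_le_exp.2 hexp)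
    (Real.exp_pos _).le (by positivity)

lemma norm_setIntegral_cpow_mul_exp_horizontal_le (hp : 0 ≤ p) (hA : 0 ≤ A) (hc : 0 < c)
    (hη : 0 ≤ η) (hb : b ≠ 0) (hR : 0 ≤ R) (hηbR : η ^ 2 + b ^ 2 ≤ R ^ 2) :
    ‖∫ u in Set.Ici (0 : ℝ), (((η - u : ℝ) : ℂ) + b * Complex.I) ^ (p : ℂ) *
        Complex.exp (A / (((η - u : ℝ) : ℂ) + b * Complex.I) +
          c * (((η - u : ℝ) : ℂ) + b * Complex.I))‖
      ≤ Real.exp (A * η / b ^ 2 + c * η) *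
          ∫ u in Set.Ici (0 : ℝ), (R + u) ^ p * Real.exp (-c * u) := by
  rw [← integral_const_mul]
  refine (norm_integral_le_integral_norm _).trans (integral_mono_of_nonneg
    (.of_forall fun _ => norm_nonneg _)
    ((integrableOn_add_rpow_mul_exp_neg_mul hR (by linarith) hc).const_mul _) ?_)
  filter_upwards [ae_restrict_mem measurableSet_Ici] with u hu
  exact norm_cpow_mul_exp_horizontal_le hp hA hη hb hR hηbR hu

end HorizontalRay

lemma sq_add_sq_ten_mul_pi_div_sqrt_le {n : ℕ} (hn : 1 ≤ n) :
    (π / √(12 * n)) ^ 2 + (10 * (π / √(12 * n))) ^ 2 ≤ 10 ^ 2 := by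
  have hn' : (1 : ℝ) ≤ n := by exact_mod_cast hn
  rw [mul_pow, div_pow, Real.sq_sqrt (by positivity)]
  field_simp
  nlinarith [Real.pi_lt_d2, Real.pi_pos]

/- With `s = √(12n)` the left side is `πs/1200 + π(n + 1/24)/s` and the right side is `πs/8`. -/
lemma corner_exponent_le {n : ℕ} (hn : 1 ≤ n) :
    π ^ 2 / 12 * (π / √(12 * n)) / (10 * (π / √(12 * n))) ^ 2 + (n + 1 / 24) * (π / √(12 * n))
      ≤ 3 * π / 4 * √(n / 3) := by
  have hn' : (1 : ℝ) ≤ n := by exact_mod_cast hn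
  set s := √(12 * n)
  have hs0 : 0 < s := by positivity
  have hs2 : s ^ 2 = 12 * n := Real.sq_sqrt (by positivity)
  have hsqrt : √(n / 3) = s / 6 := by
    rw [show (n : ℝ) / 3 = (s / 6) ^ 2 by nlinarith]
    exact Real.sqrt_sq (by positivity)
  rw [hsqrt]
  have hπ := Real.pi_pos
  field_simp
  nlinarith

theorem stmt10 (n : ℕ) (hn : 1 ≤ n) (ν : ℝ) (hν : ν ≤ -1) :
    (1 / (2 * π)) *
        (norm (∫ u in Set.Ici (0 : ℝ),
            ((((π / Real.sqrt (12 * n) - u : ℝ) : ℂ) +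
                10 * ((π / Real.sqrt (12 * n) : ℝ) : ℂ) * Complex.I) ^ ((-ν - 1 : ℝ) : ℂ) *
              Complex.exp ((π : ℂ) ^ 2 /
                  (12 * ((((π / Real.sqrt (12 * n) - u : ℝ)) : ℂ) +
                    10 * ((π / Real.sqrt (12 * n) : ℝ) : ℂ) * Complex.I)) +
                ((n : ℂ) + 1 / 24) * ((((π / Real.sqrt (12 * n) - u : ℝ)) : ℂ) +
                  10 * ((π / Real.sqrt (12 * n) : ℝ) : ℂ) * Complex.I))))
          + norm (∫ u in Set.Ici (0 : ℝ),
            ((((π / Real.sqrt (12 * n) - u : ℝ) : ℂ) -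
                10 * ((π / Real.sqrt (12 * n) : ℝ) : ℂ) * Complex.I) ^ ((-ν - 1 : ℝ) : ℂ) *
              Complex.exp ((π : ℂ) ^ 2 /
                  (12 * ((((π / Real.sqrt (12 * n) - u : ℝ)) : ℂ) -
                    10 * ((π / Real.sqrt (12 * n) : ℝ) : ℂ) * Complex.I)) +
                ((n : ℂ) + 1 / 24) * ((((π / Real.sqrt (12 * n) - u : ℝ)) : ℂ) -
                  10 * ((π / Real.sqrt (12 * n) : ℝ) : ℂ) * Complex.I))))) <
      2 * Real.exp ((3 * π / 4) * Real.sqrt ((n : ℝ) / 3)) *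
        ∫ u in Set.Ici (0 : ℝ), (10 + u) ^ (-ν - 1) * Real.exp (-((n : ℝ) + 1 / 24) * u) := by
  set η := π / √(12 * n)
  set p := -ν - 1
  set c : ℝ := n + 1 / 24
  set C := 3 * π / 4 * √(n / 3)
  set J := ∫ u in Set.Ici (0 : ℝ), (10 + u) ^ p * Real.exp (-c * u)
  have hη : 0 < η := by positivity
  have hp : 0 ≤ p := by linarith
  have hJ : 0 < J := setIntegral_add_rpow_mul_exp_neg_mul_pos (by norm_num) (by linarith)
    (by positivity)
  have hray : ∀ b : ℝ, b ^ 2 = (10 * η) ^ 2 →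
      ‖∫ u in Set.Ici (0 : ℝ), (((η - u : ℝ) : ℂ) + b * Complex.I) ^ (p : ℂ) *
        Complex.exp (((π ^ 2 / 12 : ℝ) : ℂ) / (((η - u : ℝ) : ℂ) + b * Complex.I) +
          c * (((η - u : ℝ) : ℂ) + b * Complex.I))‖ ≤ Real.exp C * J := by
    intro b hb
    have hb0 : b ≠ 0 := by rintro rfl; nlinarith
    refine (norm_setIntegral_cpow_mul_exp_horizontal_le hp (by positivity) (by positivity) hη.le
      hb0 (by norm_num) (hb ▸ sq_add_sq_ten_mul_pi_div_sqrt_le hn)).trans ?_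
    gcongr
    rw [hb]
    exact corner_exponent_le hn
  have hdiv : ∀ w : ℂ, (π : ℂ) ^ 2 / (12 * w) = ((π ^ 2 / 12 : ℝ) : ℂ) / w := fun w => by
    push_cast; ring
  have hc : (n : ℂ) + 1 / 24 = (c : ℂ) := by push_cast [c]; ring
  have hplus : ∀ u : ℝ, ((η - u : ℝ) : ℂ) + 10 * (η : ℂ) * Complex.I
      = ((η - u : ℝ) : ℂ) + ((10 * η : ℝ) : ℂ) * Complex.I := fun u => by push_cast; ring
  have hminus : ∀ u : ℝ, ((η - u : ℝ) : ℂ) - 10 * (η : ℂ) * Complex.I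
      = ((η - u : ℝ) : ℂ) + ((-(10 * η) : ℝ) : ℂ) * Complex.I := fun u => by push_cast; ring
  simp only [hdiv, hc, hplus, hminus]
  calc 1 / (2 * π) * (_ + _)
      ≤ 1 / (2 * π) * (Real.exp C * J + Real.exp C * J) :=
        mul_le_mul_of_nonneg_left (add_le_add (hray _ rfl) (hray _ (neg_sq _))) (by positivity)
    _ < 2 * Real.exp C * J := by
        rw [div_mul_eq_mul_div, one_mul, div_lt_iff₀ (by positivity)]
        nlinarith [Real.pi_gt_three, mul_pos (Real.exp_pos C) hJ]
end

section
/- Let t ≥ 2 be an integer and let z = η + iy be a complex number with 10η ≤ |y| < π and 0 < η < π/(40t). Then | ξ(e^{−z}) | < exp( 41/(50η) ). -/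
open Complex Real

lemma norm_one_add_le_exp (w : ℂ) : ‖1 + w‖ ≤ rexp (w.re + ‖w‖ ^ 2 / 2) := by
  have hsq : ‖1 + w‖ ^ 2 = 2 * w.re + ‖w‖ ^ 2 + 1 := by
    rw [Complex.sq_norm, Complex.normSq_add, Complex.normSq_eq_norm_sq w]
    simp only [map_one, one_mul, conj_re]
    ring
  have hexp : rexp (w.re + ‖w‖ ^ 2 / 2) ^ 2 = rexp (2 * w.re + ‖w‖ ^ 2) := by
    rw [← Real.exp_nat_mul]; ring_nf
  rw [← pow_le_pow_iff_left₀ (norm_nonneg _) (Real.exp_pos _).le two_ne_zero, hsq, hexp]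
  exact Real.add_one_le_exp _

lemma summable_norm_sq_of_summable {ι : Type*} {f : ι → ℂ} (hf : Summable f) :
    Summable fun i ↦ ‖f i‖ ^ 2 := by
  refine hf.norm.of_norm_bounded_eventually ?_
  filter_upwards [hf.norm.tendsto_cofinite_zero.eventually_le_const one_pos] with i hi
  rw [Real.norm_of_nonneg (by positivity), sq]
  exact mul_le_of_le_one_left (norm_nonneg _) hi

theorem norm_tprod_one_add_le_exp {ι : Type*} {f : ι → ℂ} (hf : Summable f) :
    ‖∏' i, (1 + f i)‖ ≤ rexp ((∑' i, f i).re + (∑' i, ‖f i‖ ^ 2) / 2) := by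
  have hsum : HasSum (fun i ↦ (f i).re + ‖f i‖ ^ 2 / 2)
      ((∑' i, f i).re + (∑' i, ‖f i‖ ^ 2) / 2) :=
    (Complex.hasSum_re hf.hasSum).add ((summable_norm_sq_of_summable hf).hasSum.div_const 2)
  exact le_of_tendsto_of_tendsto' (Complex.multipliable_one_add_of_summable hf).hasProd.norm
    hsum.rexp fun s ↦
      Finset.prod_le_prod (fun _ _ ↦ norm_nonneg _) fun i _ ↦ norm_one_add_le_exp (f i)

lemma tsum_inv_pow_succ {K : Type*} [NormedField K] [CompleteSpace K] {a : K} (ha : 1 < ‖a‖) :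
    ∑' n : ℕ, a⁻¹ ^ (n + 1) = 1 / (a - 1) := by
  have hinv : ‖a⁻¹‖ < 1 := by rw [norm_inv]; exact inv_lt_one_of_one_lt₀ ha
  have ha0 : a ≠ 0 := norm_pos_iff.1 (one_pos.trans ha)
  have ha1 : a - 1 ≠ 0 := sub_ne_zero.2 fun h ↦ by simp [h] at ha
  rw [← geom_series_mul_shift _ hinv, tsum_geometric_of_norm_lt_one hinv]
  field_simp

lemma min_le_norm_exp_sub_one {z : ℂ} (hre : 0 ≤ z.re) (him : |z.im| ≤ π) :
    min 1 (2 / π * |z.im|) ≤ ‖cexp z - 1‖ := by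
  rcases le_or_gt |z.im| (π / 2) with hy | hy
  · calc min 1 (2 / π * |z.im|) ≤ 2 / π * |z.im| := min_le_right _ _
      _ ≤ |Real.sin z.im| := Real.mul_abs_le_abs_sin hy
      _ ≤ rexp z.re * |Real.sin z.im| := le_mul_of_one_le_left (abs_nonneg _) (Real.one_le_exp hre)
      _ = |(cexp z - 1).im| := by
          rw [sub_im, one_im, sub_zero, exp_im, abs_mul, abs_of_pos (Real.exp_pos _)]
      _ ≤ ‖cexp z - 1‖ := abs_im_le_norm _
  · have hcos : Real.cos z.im ≤ 0 := by
      rw [← Real.cos_abs]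
      exact Real.cos_nonpos_of_pi_div_two_le_of_le hy.le (by linarith)
    calc min 1 (2 / π * |z.im|) ≤ 1 := min_le_left _ _
      _ ≤ -(cexp z - 1).re := by
          rw [sub_re, one_re, exp_re]
          nlinarith [Real.exp_pos z.re]
      _ ≤ ‖cexp z - 1‖ := (neg_le_abs _).trans (abs_re_le_norm _)

lemma one_div_exp_sub_one_le {x : ℝ} (hx : 0 < x) : 1 / (rexp x - 1) ≤ 1 / x :=
  one_div_le_one_div_of_le hx (by linarith [Real.add_one_le_exp x])

lemma re_tsum_exp_neg_pow_succ_le {z : ℂ} (hre : 0 < z.re) (hy1 : 10 * z.re ≤ |z.im|)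
    (hy2 : |z.im| < π) : (∑' n : ℕ, cexp (-z) ^ (n + 1)).re ≤ π / (10 * z.re) := by
  have hlower : 10 * z.re / π ≤ ‖cexp z - 1‖ := by
    refine le_trans ?_ (min_le_norm_exp_sub_one hre.le hy2.le)
    refine le_min ?_ ?_
    · rw [div_le_one pi_pos]; linarith
    · rw [div_mul_eq_mul_div, div_le_div_iff_of_pos_right pi_pos]; linarith
  have hexp : 1 < ‖cexp z‖ := by simpa [Complex.norm_exp] using hre
  rw [Complex.exp_neg, tsum_inv_pow_succ hexp]
  calc (1 / (cexp z - 1)).re ≤ ‖1 / (cexp z - 1)‖ := re_le_norm _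
    _ = 1 / ‖cexp z - 1‖ := by rw [norm_div, norm_one]
    _ ≤ 1 / (10 * z.re / π) := one_div_le_one_div_of_le (by positivity) hlower
    _ = π / (10 * z.re) := one_div_div _ _

lemma tsum_norm_exp_neg_pow_succ_sq_le {z : ℂ} (hre : 0 < z.re) :
    ∑' n : ℕ, ‖cexp (-z) ^ (n + 1)‖ ^ 2 ≤ 1 / (2 * z.re) := by
  have hsq : ∀ n : ℕ, ‖cexp (-z) ^ (n + 1)‖ ^ 2 = (rexp (2 * z.re))⁻¹ ^ (n + 1) := fun n ↦ by
    rw [norm_pow, ← pow_mul, mul_comm, pow_mul, Complex.norm_exp, neg_re, ← Real.exp_neg, sq,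
      ← Real.exp_add]
    ring_nf
  have hexp : 1 < ‖rexp (2 * z.re)‖ := by
    rw [Real.norm_of_nonneg (Real.exp_pos _).le, Real.one_lt_exp_iff]; positivity
  rw [tsum_congr hsq, tsum_inv_pow_succ hexp]
  exact one_div_exp_sub_one_le (by positivity)

theorem stmt15_general
    (z : ℂ) (hy1 : 10 * z.re ≤ |z.im|) (hy2 : |z.im| < Real.pi)
    (hη0 : 0 < z.re) :
    ‖xi (Complex.exp (-z))‖ < Real.exp (41 / (50 * z.re)) := by
  have hsummable : Summable fun n : ℕ ↦ cexp (-z) ^ (n + 1) :=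
    (summable_nat_add_iff 1).2 <|
      summable_geometric_of_norm_lt_one (by simpa [Complex.norm_exp] using hη0)
  calc ‖xi (cexp (-z))‖
      ≤ rexp ((∑' n : ℕ, cexp (-z) ^ (n + 1)).re + (∑' n : ℕ, ‖cexp (-z) ^ (n + 1)‖ ^ 2) / 2) :=
        norm_tprod_one_add_le_exp hsummable
    _ ≤ rexp (π / (10 * z.re) + 1 / (2 * z.re) / 2) := by
        gcongr
        · exact re_tsum_exp_neg_pow_succ_le hη0 hy1 hy2
        · exact tsum_norm_exp_neg_pow_succ_sq_le hη0
    _ < rexp (41 / (50 * z.re)) := by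
        have hsplit : π / (10 * z.re) + 1 / (2 * z.re) / 2 = (π / 10 + 1 / 4) / z.re := by
          field_simp; ring
        rw [Real.exp_lt_exp, hsplit, ← div_div]
        exact div_lt_div_of_pos_right (by linarith [pi_lt_d2]) hη0

theorem stmt15 (t : ℕ) (ht : 2 ≤ t)
    (z : ℂ) (hy1 : 10 * z.re ≤ |z.im|) (hy2 : |z.im| < Real.pi)
    (hη0 : 0 < z.re) (hη : z.re < Real.pi / (40 * t)) :
    ‖xi (Complex.exp (-z))‖ < Real.exp (41 / (50 * z.re)) :=
  stmt15_general z hy1 hy2 hη0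
end

section
/- Let η and y be real numbers with 0 < η < π/80 and 10η ≤ |y| < π. Then | 1 − e^{−(η + iy)} | > √95 · η; in particular, 1 − 2 cos(10η) e^{−η} + e^{−2η} > 95 η² for all 0 < η < π/80. -/
/-! With `E = e^{-η}`, `‖1 - e^{-(η + iy)}‖² = (1 - E)² + 2E(1 - cos y)`, and `cos y ≤ cos (10η)`
for `10η ≤ |y| ≤ π`. The second-order bounds `1 - E ≥ η - η²`, `E ≥ 1 - η` and
`1 - cos (10η) ≥ 50η² - O(η⁴)` bound this below by `(η - η²)² + 2(1 - η)(50η² - O(η⁴))`,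
which exceeds `95η²` as long as `η ≤ 1/25`; and `π/80 < 1/25`. -/

open Real

lemma Complex.sq_norm_one_sub_exp (z : ℂ) :
    ‖1 - Complex.exp z‖ ^ 2 = 1 - 2 * Real.cos z.im * Real.exp z.re + Real.exp z.re ^ 2 := by
  rw [Complex.sq_norm, Complex.normSq_apply]
  simp only [Complex.sub_re, Complex.sub_im, Complex.one_re, Complex.one_im,
    Complex.exp_re, Complex.exp_im]
  linear_combination Real.exp z.re ^ 2 * Real.sin_sq_add_cos_sq z.im

lemma Real.exp_neg_le_one_sub_add_sq {t : ℝ} (ht : 0 ≤ t) : exp (-t) ≤ 1 - t + t ^ 2 := by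
  have h1t : 0 < 1 + t := by linarith
  calc exp (-t) = (exp t)⁻¹ := exp_neg t
    _ ≤ (1 + t)⁻¹ := inv_anti₀ h1t (by linarith [add_one_le_exp t])
    _ ≤ 1 - t + t ^ 2 := by
      -- `(1 + t)(1 - t + t²) = 1 + t³`
      rw [inv_le_iff_one_le_mul₀ h1t]
      nlinarith [pow_nonneg ht 3]

lemma Real.sq_div_two_sub_le_one_sub_cos {x : ℝ} (hx : |x| ≤ 1) :
    x ^ 2 / 2 - x ^ 4 * (5 / 96) ≤ 1 - cos x := by
  have h := (abs_le.mp (cos_bound hx)).2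
  rw [pow_abs, abs_of_nonneg (by positivity)] at h
  linarith

lemma ninety_five_mul_sq_lt_one_sub_two_mul_cos_mul_exp_add_exp_sq {t : ℝ} (ht0 : 0 < t)
    (ht : t ≤ 1 / 25) :
    95 * t ^ 2 < 1 - 2 * cos (10 * t) * exp (-t) + exp (-t) ^ 2 := by
  set E := exp (-t)
  have hE : 1 - t ≤ E := one_sub_le_exp_neg t
  have h1E : t - t ^ 2 ≤ 1 - E := by linarith [exp_neg_le_one_sub_add_sq ht0.le]
  have hcos : 50 * t ^ 2 - 3125 / 6 * t ^ 4 ≤ 1 - cos (10 * t) := by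
    have := sq_div_two_sub_le_one_sub_cos (x := 10 * t)
      (by rw [abs_of_pos (by positivity)]; linarith)
    linarith
  have hpoly : 95 * t ^ 2 < (t - t ^ 2) ^ 2 + 2 * ((1 - t) * (50 * t ^ 2 - 3125 / 6 * t ^ 4)) := by
    nlinarith [mul_pos ht0 ht0, pow_pos ht0 3, pow_pos ht0 4, pow_pos ht0 5]
  have hsq : (t - t ^ 2) ^ 2 ≤ (1 - E) ^ 2 := pow_le_pow_left₀ (by nlinarith) h1E 2
  have hprod : (1 - t) * (50 * t ^ 2 - 3125 / 6 * t ^ 4) ≤ E * (1 - cos (10 * t)) :=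
    mul_le_mul hE hcos (by nlinarith) (exp_pos _).le
  linear_combination hpoly + hsq + 2 * hprod

theorem stmt18 (η y : ℝ) (hη0 : 0 < η) (hη : η < Real.pi / 80)
    (hy1 : 10 * η ≤ |y|) (hy2 : |y| < Real.pi) :
    Real.sqrt 95 * η < ‖1 - Complex.exp (-((η : ℂ) + Complex.I * (y : ℂ)))‖ ∧
      ∀ η' : ℝ, 0 < η' → η' < Real.pi / 80 →
        95 * η' ^ 2 < 1 - 2 * Real.cos (10 * η') * Real.exp (-η') + Real.exp (-2 * η') := by
  have key (t : ℝ) (h0 : 0 < t) (h1 : t < π / 80) :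
      95 * t ^ 2 < 1 - 2 * cos (10 * t) * exp (-t) + exp (-t) ^ 2 :=
    ninety_five_mul_sq_lt_one_sub_two_mul_cos_mul_exp_add_exp_sq h0 (by linarith [pi_lt_d2])
  refine ⟨?_, fun t h0 h1 => ?_⟩
  · have hcos : cos y ≤ cos (10 * η) := by
      rw [← cos_abs y]
      exact cos_le_cos_of_nonneg_of_le_pi (by positivity) hy2.le hy1
    have hsq : (√95 * η) ^ 2 < ‖1 - Complex.exp (-((η : ℂ) + Complex.I * (y : ℂ)))‖ ^ 2 := by
      rw [mul_pow, sq_sqrt (by norm_num), Complex.sq_norm_one_sub_exp]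
      simp only [Complex.neg_re, Complex.neg_im, Complex.add_re, Complex.add_im,
        Complex.ofReal_re, Complex.ofReal_im, Complex.mul_re, Complex.mul_im, Complex.I_re,
        Complex.I_im, cos_neg, zero_mul, one_mul, mul_zero, zero_add, add_zero, sub_zero]
      nlinarith [key η hη0 hη, exp_pos (-η)]
    exact lt_of_pow_lt_pow_left₀ 2 (norm_nonneg _) hsq
  · have hexp : exp (-2 * t) = exp (-t) ^ 2 := by rw [← exp_nat_mul]; ring_nf
    exact hexp ▸ key t h0 h1
end

section
/- For every integer n ≥ 0, | (1 − 2^{n+1}) B_{n+1} / (n+1) | / n! ≤ (π/3) · π^{−n}, where B_k denotes the k-th Bernoulli number. (The left-hand side equals |e_n|/n!, where e_n := E_n(0)/2 are the Taylor coefficients of E(z) = e^{−z}/(1 + e^{−z}) = Σ_{n≥0} (e_n/n!) zⁿ.) -/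
/-!
Euler's formula `ζ(2k) = (-1)^(k+1) 2^(2k-1) π^(2k) B_(2k) / (2k)!` together with `ζ(2k) ≤ ζ(2)`
gives `|B_m| / m! ≤ 2 ζ(2) / (2π)^m` for every `m` (odd Bernoulli numbers beyond `B_1` vanish,
and `m = 0, 1` are checked by hand). The factor `|1 - 2^(n+1)| ≤ 2^(n+1)` then cancels the `2^(n+1)`
in `(2π)^(n+1)`.
-/

open Real
open scoped Nat

theorem tsum_one_div_nat_pow_le_pi_sq_div_six {p : ℕ} (hp : 2 ≤ p) :
    ∑' n : ℕ, 1 / (n : ℝ) ^ p ≤ π ^ 2 / 6 := by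
  rw [← hasSum_zeta_two.tsum_eq]
  refine (Real.summable_one_div_nat_pow.mpr (by omega)).tsum_le_tsum (fun n ↦ ?_)
    hasSum_zeta_two.summable
  rcases Nat.eq_zero_or_pos n with rfl | hn
  · simp [show p ≠ 0 by omega]
  · exact one_div_le_one_div_of_le (by positivity) (pow_le_pow_right₀ (mod_cast hn) hp)

theorem abs_bernoulli_two_mul_div_factorial_le {k : ℕ} (hk : k ≠ 0) :
    |(bernoulli (2 * k) : ℝ)| / (2 * k)! ≤ π ^ 2 / 3 / (2 * π) ^ (2 * k) := by
  set ζ := ∑' n : ℕ, 1 / (n : ℝ) ^ (2 * k)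
  set c : ℝ := 2 ^ (2 * k - 1) * π ^ (2 * k)
  have hc : 0 < c := by positivity
  have hζ : ζ = (-1) ^ (k + 1) * c * bernoulli (2 * k) / (2 * k)! :=
    (hasSum_zeta_nat hk).tsum_eq.trans (by ring)
  have hζ_nonneg : 0 ≤ ζ := tsum_nonneg fun n ↦ by positivity
  calc |(bernoulli (2 * k) : ℝ)| / (2 * k)!
      = ζ / c := by
        rw [eq_div_iff hc.ne', ← abs_of_nonneg hζ_nonneg, hζ, abs_div, abs_mul, abs_mul,
          abs_of_pos hc, Nat.abs_cast]
        simp only [abs_pow, abs_neg, abs_one, one_pow, one_mul]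
        ring
    _ ≤ π ^ 2 / 6 / c := by gcongr; exact tsum_one_div_nat_pow_le_pi_sq_div_six (by omega)
    _ = π ^ 2 / 3 / (2 * π) ^ (2 * k) := by
        rw [mul_pow, show (2 : ℝ) ^ (2 * k) = 2 * 2 ^ (2 * k - 1) by
          rw [← pow_succ', Nat.sub_add_cancel (by omega)]]
        field_simp
        ring

theorem abs_bernoulli_div_factorial_le (n : ℕ) :
    |(bernoulli n : ℝ)| / n ! ≤ π ^ 2 / 3 / (2 * π) ^ n := by
  have hπ := pi_gt_three
  rcases Nat.even_or_odd n with ⟨k, rfl⟩ | hodd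
  · rcases eq_or_ne k 0 with rfl | hk
    · simp only [add_zero, bernoulli_zero, Rat.cast_one, abs_one, Nat.factorial_zero, Nat.cast_one,
        div_one, pow_zero]
      nlinarith
    · simpa [two_mul] using abs_bernoulli_two_mul_div_factorial_le hk
  · rcases eq_or_ne n 1 with rfl | hn
    · rw [bernoulli_one, le_div_iff₀ (by positivity)]
      norm_num
      nlinarith
    · rw [bernoulli_eq_zero_of_odd hodd (by grind)]
      simp only [Rat.cast_zero, abs_zero, zero_div]
      positivity

theorem stmt19 (n : ℕ) :
    |(1 - 2 ^ (n + 1)) * ((bernoulli (n + 1) : ℚ) : ℝ) / ((n : ℝ) + 1)| / (Nat.factorial n : ℝ)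
      ≤ (Real.pi / 3) * (1 / Real.pi) ^ n := by
  have hπ := pi_pos
  have h2pow : |(1 : ℝ) - 2 ^ (n + 1)| ≤ 2 ^ (n + 1) := by
    rw [abs_sub_comm, abs_of_nonneg (by simpa using one_le_pow₀ (one_le_two (α := ℝ)))]
    linarith
  calc |(1 - 2 ^ (n + 1)) * ((bernoulli (n + 1) : ℚ) : ℝ) / ((n : ℝ) + 1)| / (n ! : ℝ)
      = |(1 : ℝ) - 2 ^ (n + 1)| * (|(bernoulli (n + 1) : ℝ)| / (n + 1)!) := by
        rw [Nat.factorial_succ, abs_div, abs_mul, abs_of_pos (by positivity : (0 : ℝ) < n + 1)]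
        push_cast
        field_simp
    _ ≤ 2 ^ (n + 1) * (π ^ 2 / 3 / (2 * π) ^ (n + 1)) :=
        mul_le_mul h2pow (abs_bernoulli_div_factorial_le _) (by positivity) (by positivity)
    _ = π / 3 * (1 / π) ^ n := by
        rw [one_div_pow]
        field_simp
        ring
end
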